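/- arXiv:2006.06847 — 4 statements merged into one kernel-verified Lean document; each statement's English description precedes it below -/
import Mathlib

section
/- For every n ∈ ℕ and all x, y ∈ 𝕊, the infimum defining d_n(x,y) (respectively d_Δ(x,y)) is unchanged if it is taken only over minimal chains of dyadic arcs joining x to y, where a chain {I_i} is minimal if its intervals have pairwise disjoint interiors and no union of at least two distinct intervals from the chain equals a dyadic arc. -/
noncomputable section

instance : Fact ((0 : ℝ) < 1) := ⟨one_pos⟩

/-- The closed dyadic arc of level `n` and index `j` in the circle `𝕊 = [0,1]/{0,1}`,
realized as `AddCircle (1 : ℝ)`: the image of `[j/2^n, (j+1)/2^n]`. -/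
def dyadicArc (n j : ℕ) : Set (AddCircle (1 : ℝ)) :=
  (fun r : ℝ => (r : AddCircle (1 : ℝ))) '' Set.Icc ((j : ℝ) / 2 ^ n) (((j : ℝ) + 1) / 2 ^ n)

/-- The left endpoint of the dyadic arc of level `n` and index `j`. -/
def leftPt (n j : ℕ) : AddCircle (1 : ℝ) := (((j : ℝ) / 2 ^ n : ℝ) : AddCircle (1 : ℝ))

/-- The right endpoint of the dyadic arc of level `n` and index `j`. -/
def rightPt (n j : ℕ) : AddCircle (1 : ℝ) := ((((j : ℝ) + 1) / 2 ^ n : ℝ) : AddCircle (1 : ℝ))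

/-- `Δ` (given as a function of the level `n` and the index `j < 2^n` of a dyadic arc) is a
dyadic diameter function of type `𝒮₁`: `Δ(𝕊) = 1`, `Δ` is positive, the two children of any
dyadic arc have equal `Δ`-value, which is either half of or equal to that of their parent,
and `max {Δ(I) : I ∈ ℐ_n} → 0` as `n → ∞`. -/
def IsS1 (Δ : ℕ → ℕ → ℝ) : Prop :=
  Δ 0 0 = 1 ∧
  (∀ n j : ℕ, j < 2 ^ n → 0 < Δ n j) ∧
  (∀ n j : ℕ, j < 2 ^ n → Δ (n + 1) (2 * j) = Δ (n + 1) (2 * j + 1) ∧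
    (Δ (n + 1) (2 * j) = Δ n j / 2 ∨ Δ (n + 1) (2 * j) = Δ n j)) ∧
  (∀ ε : ℝ, 0 < ε → ∃ N : ℕ, ∀ n ≥ N, ∀ j < 2 ^ n, Δ n j < ε)

/-- `c` is a chain of dyadic arcs (given by level-index pairs) joining `x` to `y`:
all indices are valid, the union of the arcs is connected, and it contains `x` and `y`. -/
def IsDyadicChain (N : ℕ) (c : Fin (N + 1) → ℕ × ℕ) (x y : AddCircle (1 : ℝ)) : Prop :=
  (∀ k, (c k).2 < 2 ^ (c k).1) ∧
  IsConnected (⋃ k, dyadicArc (c k).1 (c k).2) ∧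
  x ∈ ⋃ k, dyadicArc (c k).1 (c k).2 ∧ y ∈ ⋃ k, dyadicArc (c k).1 (c k).2

/-- The set of sums `Σ Δ'(J_k)` over all chains of dyadic arcs joining `x` and `y`. -/
def chainSums (Δ' : ℕ → ℕ → ℝ) (x y : AddCircle (1 : ℝ)) : Set ℝ :=
  {s | ∃ (N : ℕ) (c : Fin (N + 1) → ℕ × ℕ), IsDyadicChain N c x y ∧
    s = ∑ k, Δ' (c k).1 (c k).2}

/-- The distance associated to a weight `Δ'` on dyadic arcs:
`d(x,y) = inf Σ Δ'(J_k)` over all chains of dyadic arcs joining `x` and `y`. -/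
def dOf (Δ' : ℕ → ℕ → ℝ) (x y : AddCircle (1 : ℝ)) : ℝ := sInf (chainSums Δ' x y)

/-- The truncation `Δ_n` of `Δ`: `Δ_n(I) = Δ(I)` for arcs of level `≤ n`, and
`Δ_n(I) = ½ Δ_n(parent of I)` for arcs of level `> n`. -/
def trunc (Δ : ℕ → ℕ → ℝ) (n : ℕ) : ℕ → ℕ → ℝ := fun m j =>
  if m ≤ n then Δ m j else Δ n (j / 2 ^ (m - n)) / 2 ^ (m - n)

/-- A chain of dyadic arcs is minimal if the arcs have pairwise disjoint interiors and no
union of at least two distinct arcs from the chain equals a dyadic arc. -/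
def IsMinimalChain (N : ℕ) (c : Fin (N + 1) → ℕ × ℕ) : Prop :=
  (∀ k l : Fin (N + 1), k ≠ l →
    interior (dyadicArc (c k).1 (c k).2) ∩ interior (dyadicArc (c l).1 (c l).2) = ∅) ∧
  (∀ T : Finset (Fin (N + 1)), 2 ≤ T.card →
    ¬∃ m j : ℕ, j < 2 ^ m ∧ (⋃ k ∈ T, dyadicArc (c k).1 (c k).2) = dyadicArc m j)

/-- The set of sums `Σ Δ'(J_k)` over all minimal chains of dyadic arcs joining `x` and `y`. -/
def minChainSums (Δ' : ℕ → ℕ → ℝ) (x y : AddCircle (1 : ℝ)) : Set ℝ :=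
  {s | ∃ (N : ℕ) (c : Fin (N + 1) → ℕ × ℕ), IsDyadicChain N c x y ∧ IsMinimalChain N c ∧
    s = ∑ k, Δ' (c k).1 (c k).2}

/-!
Call a weight `w` on dyadic arcs subadditive if `w I ≤ w I' + w I''` for the two children
`I', I''` of every arc `I`; `Δ` and all its truncations `Δ_n` are such weights. For these, a
dyadic arc `J` that is the union of finitely many dyadic arcs weighs at most their total weight:
either `J` is one of them, or they split between the two children of `J`, and one inducts on the
depth. A chain that is not minimal has a subfamily of at least two arcs whose union is a dyadic
arc `J` (two arcs with overlapping interiors are nested, and their union is the larger one).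
Replacing that subfamily by `J` gives a shorter chain with the same union and no larger sum, so
every chain sum dominates the sum of a minimal chain.
-/

open Set

namespace DyadicChain

def dyadicIcc (m j : ℕ) : Set ℝ := Icc ((j : ℝ) / 2 ^ m) (((j : ℝ) + 1) / 2 ^ m)

theorem dyadicIcc_left_lt_right (m j : ℕ) : (j : ℝ) / 2 ^ m < ((j : ℝ) + 1) / 2 ^ m := by
  gcongr; linarith

theorem interior_dyadicIcc (m j : ℕ) :
    interior (dyadicIcc m j) = Ioo ((j : ℝ) / 2 ^ m) (((j : ℝ) + 1) / 2 ^ m) :=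
  interior_Icc

theorem interior_dyadicIcc_nonempty (m j : ℕ) : (interior (dyadicIcc m j)).Nonempty := by
  rw [interior_dyadicIcc]; exact nonempty_Ioo.2 (dyadicIcc_left_lt_right m j)

theorem dyadicIcc_subset_Icc {m j : ℕ} (hj : j < 2 ^ m) : dyadicIcc m j ⊆ Icc 0 1 := by
  refine Icc_subset_Icc (by positivity) ((div_le_one (by positivity)).2 ?_)
  exact_mod_cast hj

theorem div_two_pow_eq_mul_div_two_pow_add (a : ℝ) (m q : ℕ) :
    a / 2 ^ m = a * 2 ^ q / 2 ^ (m + q) := by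
  rw [pow_add, mul_div_mul_right _ _ (by positivity)]

theorem nat_div_two_pow_eq_iff {j j' q : ℕ} :
    j' / 2 ^ q = j ↔ j * 2 ^ q ≤ j' ∧ j' < (j + 1) * 2 ^ q := by
  refine ⟨fun h => ⟨?_, ?_⟩, fun h => Nat.div_eq_of_lt_le h.1 h.2⟩
  · exact (Nat.le_div_iff_mul_le (by positivity)).1 h.ge
  · exact (Nat.div_lt_iff_lt_mul (by positivity)).1 (by omega)

theorem dyadicIcc_add_subset_iff {m q j j' : ℕ} :
    dyadicIcc (m + q) j' ⊆ dyadicIcc m j ↔ j' / 2 ^ q = j := by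
  rw [dyadicIcc, dyadicIcc, Icc_subset_Icc_iff (dyadicIcc_left_lt_right _ _).le,
    div_two_pow_eq_mul_div_two_pow_add (j : ℝ) m q, div_two_pow_eq_mul_div_two_pow_add _ m q,
    div_le_div_iff_of_pos_right (by positivity), div_le_div_iff_of_pos_right (by positivity),
    nat_div_two_pow_eq_iff, Nat.lt_iff_add_one_le]
  norm_cast

theorem le_of_dyadicIcc_subset {m m' j j' : ℕ} (h : dyadicIcc m' j' ⊆ dyadicIcc m j) : m ≤ m' := by
  rw [dyadicIcc, dyadicIcc, Icc_subset_Icc_iff (dyadicIcc_left_lt_right _ _).le, add_div,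
    add_div] at h
  have : (1 : ℝ) / 2 ^ m' ≤ 1 / 2 ^ m := by linarith [h.1, h.2]
  rwa [one_div_le_one_div (by positivity) (by positivity),
    pow_le_pow_iff_right₀ one_lt_two] at this

theorem dyadicIcc_subset_iff {m m' j j' : ℕ} :
    dyadicIcc m' j' ⊆ dyadicIcc m j ↔ m ≤ m' ∧ j' / 2 ^ (m' - m) = j := by
  constructor
  · intro h
    obtain ⟨q, rfl⟩ := Nat.exists_eq_add_of_le (le_of_dyadicIcc_subset h)
    simpa [dyadicIcc_add_subset_iff] using h
  · rintro ⟨hm, hj⟩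
    obtain ⟨q, rfl⟩ := Nat.exists_eq_add_of_le hm
    simpa [dyadicIcc_add_subset_iff] using hj

theorem dyadicIcc_subset_of_mem {m m' j j' : ℕ} {t : ℝ} (hm : m ≤ m')
    (ht' : t ∈ interior (dyadicIcc m' j')) (ht : t ∈ dyadicIcc m j) :
    dyadicIcc m' j' ⊆ dyadicIcc m j := by
  obtain ⟨q, rfl⟩ := Nat.exists_eq_add_of_le hm
  rw [interior_dyadicIcc] at ht'
  rw [dyadicIcc_add_subset_iff, nat_div_two_pow_eq_iff]
  rw [dyadicIcc, div_two_pow_eq_mul_div_two_pow_add (j : ℝ) m q,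
    div_two_pow_eq_mul_div_two_pow_add _ m q] at ht
  have h₁ : (j : ℝ) * 2 ^ q < j' + 1 :=
    (div_lt_div_iff_of_pos_right (by positivity)).1 (ht.1.trans_lt ht'.2)
  have h₂ : (j' : ℝ) < (j + 1) * 2 ^ q :=
    (div_lt_div_iff_of_pos_right (by positivity)).1 (ht'.1.trans_le ht.2)
  exact ⟨by exact_mod_cast Nat.lt_succ_iff.1 (by exact_mod_cast h₁), by exact_mod_cast h₂⟩

theorem dyadicIcc_subset_or_subset_of_mem {m m' j j' : ℕ} {t : ℝ}
    (ht : t ∈ interior (dyadicIcc m j)) (ht' : t ∈ interior (dyadicIcc m' j')) :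
    dyadicIcc m j ⊆ dyadicIcc m' j' ∨ dyadicIcc m' j' ⊆ dyadicIcc m j := by
  rcases le_total m m' with hm | hm
  · exact Or.inr (dyadicIcc_subset_of_mem hm ht' (interior_subset ht))
  · exact Or.inl (dyadicIcc_subset_of_mem hm ht (interior_subset ht'))

theorem eq_of_dyadicIcc_subset_of_subset {n i i' m' j' : ℕ} (h : dyadicIcc m' j' ⊆ dyadicIcc n i)
    (h' : dyadicIcc m' j' ⊆ dyadicIcc n i') : i = i' :=
  (dyadicIcc_subset_iff.1 h).2.symm.trans (dyadicIcc_subset_iff.1 h').2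

theorem eq_of_dyadicIcc_subset_antisymm {m m' j j' : ℕ} (h : dyadicIcc m' j' ⊆ dyadicIcc m j)
    (h' : dyadicIcc m j ⊆ dyadicIcc m' j') : (m', j') = (m, j) := by
  have hm : m' = m := le_antisymm (le_of_dyadicIcc_subset h') (le_of_dyadicIcc_subset h)
  subst hm
  simpa using (dyadicIcc_subset_iff.1 h).2

theorem dyadicIcc_child_subset {m j i : ℕ} (hi : i / 2 = j) :
    dyadicIcc (m + 1) i ⊆ dyadicIcc m j :=
  dyadicIcc_subset_iff.2 ⟨m.le_succ, by simpa using hi⟩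

theorem exists_dyadicIcc_child_of_subset {m m' j j' : ℕ} (h : dyadicIcc m' j' ⊆ dyadicIcc m j)
    (hne : (m', j') ≠ (m, j)) : ∃ i, i / 2 = j ∧ dyadicIcc m' j' ⊆ dyadicIcc (m + 1) i := by
  obtain ⟨hm, hj⟩ := dyadicIcc_subset_iff.1 h
  have hm' : m + 1 ≤ m' := hm.lt_of_ne (by rintro rfl; simp_all)
  refine ⟨j' / 2 ^ (m' - (m + 1)), ?_, dyadicIcc_subset_iff.2 ⟨hm', rfl⟩⟩
  rw [Nat.div_div_eq_div_mul, ← pow_succ, ← hj]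
  congr 2
  omega

theorem coe_mem_dyadicArc_iff {m j : ℕ} (hj : j < 2 ^ m) {t : ℝ} (ht : t ∈ Ioo 0 1) :
    (t : AddCircle (1 : ℝ)) ∈ dyadicArc m j ↔ t ∈ dyadicIcc m j := by
  refine ⟨fun ⟨s, hs, hst⟩ => ?_, mem_image_of_mem _⟩
  have hs₀₁ := dyadicIcc_subset_Icc hj hs
  -- `s = 0` and `s = 1` represent the same point: compare in `[0, 1)`, resp. `(0, 1]`
  rcases hs₀₁.1.eq_or_lt with rfl | hs₀
  · rw [AddCircle.coe_eq_coe_iff_of_mem_Ico (a := 0) (by simp)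
      (by simpa using ⟨ht.1.le, ht.2⟩)] at hst
    linarith [ht.1]
  · rwa [← (AddCircle.coe_eq_coe_iff_of_mem_Ioc (a := 0) (by simpa using ⟨hs₀, hs₀₁.2⟩)
      (by simpa using ⟨ht.1, ht.2.le⟩)).1 hst]

theorem interior_dyadicIcc_subset_Ioo {m j : ℕ} (hj : j < 2 ^ m) :
    interior (dyadicIcc m j) ⊆ Ioo 0 1 := by
  simpa using interior_mono (dyadicIcc_subset_Icc hj)

theorem dyadicArc_subset_iff {m m' j j' : ℕ} (hj : j < 2 ^ m) (hj' : j' < 2 ^ m') :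
    dyadicArc m' j' ⊆ dyadicArc m j ↔ dyadicIcc m' j' ⊆ dyadicIcc m j := by
  refine ⟨fun h => ?_, image_mono⟩
  have hint : interior (dyadicIcc m' j') ⊆ dyadicIcc m j := fun t ht =>
    (coe_mem_dyadicArc_iff hj (interior_dyadicIcc_subset_Ioo hj' ht)).1
      (h (mem_image_of_mem _ (interior_subset ht)))
  have hcl : closure (interior (dyadicIcc m' j')) = dyadicIcc m' j' := by
    rw [interior_dyadicIcc, closure_Ioo (dyadicIcc_left_lt_right m' j').ne, dyadicIcc]
  exact hcl ▸ closure_minimal hint isClosed_Icc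

theorem exists_Ioo_subset_of_isOpen {U : Set (AddCircle (1 : ℝ))} (hU : IsOpen U)
    (hne : U.Nonempty) :
    ∃ a b : ℝ, 0 ≤ a ∧ a < b ∧ b ≤ 1 ∧ ∀ t ∈ Ioo a b, (t : AddCircle (1 : ℝ)) ∈ U := by
  obtain ⟨u, hu⟩ := hne
  induction u using QuotientAddGroup.induction_on with | H s => ?_
  rw [← AddCircle.coe_fract] at hu
  obtain ⟨ε, hε, hball⟩ :=
    Metric.isOpen_iff.1 (hU.preimage (AddCircle.continuous_mk' 1)) (Int.fract s) hu
  refine ⟨Int.fract s, min (Int.fract s + ε) 1, Int.fract_nonneg s,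
    lt_min (by linarith) (Int.fract_lt_one s), min_le_right _ _, fun t ht => hball ?_⟩
  rw [Metric.mem_ball, Real.dist_eq, abs_sub_lt_iff]
  constructor <;> linarith [ht.1, ht.2, min_le_left (Int.fract s + ε) 1]

theorem dyadicArc_subset_or_subset {m m' j j' : ℕ} (hj : j < 2 ^ m) (hj' : j' < 2 ^ m')
    (h : (interior (dyadicArc m j) ∩ interior (dyadicArc m' j')).Nonempty) :
    dyadicArc m j ⊆ dyadicArc m' j' ∨ dyadicArc m' j' ⊆ dyadicArc m j := by
  obtain ⟨a, b, ha, hab, hb, hU⟩ :=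
    exists_Ioo_subset_of_isOpen (isOpen_interior.inter isOpen_interior) h
  have hI : ∀ {n i : ℕ}, i < 2 ^ n → (∀ t ∈ Ioo a b, (t : AddCircle (1 : ℝ)) ∈ dyadicArc n i) →
      Ioo a b ⊆ interior (dyadicIcc n i) := fun hi hmem =>
    interior_maximal (fun t ht => (coe_mem_dyadicArc_iff hi
      ⟨ha.trans_lt ht.1, ht.2.trans_le hb⟩).1 (hmem t ht)) isOpen_Ioo
  have ht : (a + b) / 2 ∈ Ioo a b := ⟨by linarith, by linarith⟩
  rw [dyadicArc_subset_iff hj' hj, dyadicArc_subset_iff hj hj']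
  exact dyadicIcc_subset_or_subset_of_mem
    (hI hj (fun t ht => interior_subset (hU t ht).1) ht)
    (hI hj' (fun t ht => interior_subset (hU t ht).2) ht)

theorem dyadicArc_zero_zero : dyadicArc 0 0 = univ := by
  simpa [dyadicArc] using AddCircle.coe_image_Icc_eq (1 : ℝ) 0

theorem exists_biUnion_eq_dyadicArc_of_not_isMinimalChain {N : ℕ} {c : Fin (N + 1) → ℕ × ℕ}
    (hval : ∀ k, (c k).2 < 2 ^ (c k).1) (h : ¬IsMinimalChain N c) :
    ∃ T : Finset (Fin (N + 1)), 2 ≤ T.card ∧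
      ∃ m j, j < 2 ^ m ∧ ⋃ k ∈ T, dyadicArc (c k).1 (c k).2 = dyadicArc m j := by
  classical
  rw [IsMinimalChain, not_and_or] at h
  push Not at h
  rcases h with ⟨k, l, hkl, hint⟩ | h
  · refine ⟨{k, l}, (Finset.card_pair hkl).ge, ?_⟩
    rw [Finset.set_biUnion_insert, Finset.set_biUnion_singleton]
    rcases dyadicArc_subset_or_subset (hval k) (hval l) hint with h | h
    · exact ⟨_, _, hval l, union_eq_right.2 h⟩
    · exact ⟨_, _, hval k, union_eq_left.2 h⟩
  · exact h

theorem minChainSums_nonempty (w : ℕ → ℕ → ℝ) (x y : AddCircle (1 : ℝ)) :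
    (minChainSums w x y).Nonempty := by
  refine ⟨_, 0, fun _ => (0, 0), ⟨fun _ => by simp, ?_, ?_, ?_⟩,
    ⟨fun k l hkl => absurd (Subsingleton.elim (α := Fin 1) k l) hkl, fun T hT => ?_⟩, rfl⟩
  all_goals simp only [iUnion_const, dyadicArc_zero_zero, mem_univ]
  · exact isConnected_univ
  · have := T.card_le_univ
    simp only [Fintype.card_fin] at this
    omega

structure IsSubadditiveWeight (w : ℕ → ℕ → ℝ) : Prop where
  nonneg : ∀ m j, j < 2 ^ m → 0 ≤ w m j
  le_add : ∀ m j, j < 2 ^ m → w m j ≤ w (m + 1) (2 * j) + w (m + 1) (2 * j + 1)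

namespace IsSubadditiveWeight

variable {w : ℕ → ℕ → ℝ} {ι : Type*}

theorem le_sum_of_mem (hw : IsSubadditiveWeight w) (f : ι → ℕ × ℕ) {m j : ℕ} {T : Finset ι}
    (hval : ∀ k ∈ T, (f k).2 < 2 ^ (f k).1) {k : ι} (hk : k ∈ T) (hfk : f k = (m, j)) :
    w m j ≤ ∑ k ∈ T, w (f k).1 (f k).2 :=
  calc w m j = w (f k).1 (f k).2 := by rw [hfk]
    _ ≤ ∑ k ∈ T, w (f k).1 (f k).2 :=
      Finset.single_le_sum (fun k hk => hw.nonneg _ _ (hval k hk)) hk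

/-- `hcov` is a combinatorial form of `dyadicIcc m j ⊆ ⋃ k ∈ T, dyadicIcc (f k).1 (f k).2`. -/
theorem le_sum_of_dyadicIcc_cover (hw : IsSubadditiveWeight w) (f : ι → ℕ × ℕ) (d : ℕ)
    {m j : ℕ} {T : Finset ι} (hj : j < 2 ^ m)
    (hval : ∀ k ∈ T, (f k).2 < 2 ^ (f k).1)
    (hsub : ∀ k ∈ T, dyadicIcc (f k).1 (f k).2 ⊆ dyadicIcc m j)
    (hcov : ∀ i, dyadicIcc (m + d) i ⊆ dyadicIcc m j →
      ∃ k ∈ T, dyadicIcc (m + d) i ⊆ dyadicIcc (f k).1 (f k).2) :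
    w m j ≤ ∑ k ∈ T, w (f k).1 (f k).2 := by
  classical
  induction d generalizing m j T with
  | zero =>
    obtain ⟨k, hk, hJk⟩ := hcov j subset_rfl
    exact hw.le_sum_of_mem f hval hk (eq_of_dyadicIcc_subset_antisymm (hsub k hk) hJk)
  | succ d ih =>
    by_cases hJ : ∃ k ∈ T, f k = (m, j)
    · obtain ⟨k, hk, hfk⟩ := hJ
      exact hw.le_sum_of_mem f hval hk hfk
    push Not at hJ
    rw [show m + (d + 1) = m + 1 + d by omega] at hcov
    have hchild (k) (hk : k ∈ T) := exists_dyadicIcc_child_of_subset (hsub k hk) (hJ k hk)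
    have hhalf : ∀ i, i / 2 = j → w (m + 1) i ≤
        ∑ k ∈ T with dyadicIcc (f k).1 (f k).2 ⊆ dyadicIcc (m + 1) i, w (f k).1 (f k).2 := by
      intro i hi
      refine ih (by rw [pow_succ]; omega) (fun k hk => hval k (Finset.mem_filter.1 hk).1)
        (fun k hk => (Finset.mem_filter.1 hk).2) (fun i' hi' => ?_)
      obtain ⟨k, hk, hi'k⟩ := hcov i' (hi'.trans (dyadicIcc_child_subset hi))
      obtain ⟨i'', -, hki''⟩ := hchild k hk
      obtain rfl : i = i'' := eq_of_dyadicIcc_subset_of_subset hi' (hi'k.trans hki'')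
      exact ⟨k, Finset.mem_filter.2 ⟨hk, hki''⟩, hi'k⟩
    have hright : ∀ k ∈ T, dyadicIcc (f k).1 (f k).2 ⊆ dyadicIcc (m + 1) (2 * j + 1) ↔
        ¬dyadicIcc (f k).1 (f k).2 ⊆ dyadicIcc (m + 1) (2 * j) := by
      intro k hk
      obtain ⟨i, hi, hki⟩ := hchild k hk
      refine ⟨fun h h' => ?_, fun h => ?_⟩
      · have := eq_of_dyadicIcc_subset_of_subset h h'
        omega
      · obtain rfl | rfl : i = 2 * j ∨ i = 2 * j + 1 := by omega
        exacts [absurd hki h, hki]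
    calc w m j ≤ w (m + 1) (2 * j) + w (m + 1) (2 * j + 1) := hw.le_add m j hj
      _ ≤ _ := add_le_add (hhalf _ (by omega)) (hhalf _ (by omega))
      _ = ∑ k ∈ T, w (f k).1 (f k).2 := by
        rw [Finset.filter_congr hright, Finset.sum_filter_add_sum_filter_not]

theorem le_sum_of_biUnion_eq (hw : IsSubadditiveWeight w) {f : ι → ℕ × ℕ} {T : Finset ι}
    {m j : ℕ} (hj : j < 2 ^ m) (hval : ∀ k ∈ T, (f k).2 < 2 ^ (f k).1)
    (hT : ⋃ k ∈ T, dyadicArc (f k).1 (f k).2 = dyadicArc m j) :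
    w m j ≤ ∑ k ∈ T, w (f k).1 (f k).2 := by
  set D := T.sup fun k => (f k).1
  refine hw.le_sum_of_dyadicIcc_cover f (D - m) hj hval (fun k hk => ?_) (fun i hi => ?_)
  · exact (dyadicArc_subset_iff hj (hval k hk)).1 (hT ▸ subset_biUnion_of_mem (u := fun k =>
      dyadicArc (f k).1 (f k).2) hk)
  · -- an interior point of the level-`D` interval lies in some arc of `T`, of level at most `D`
    obtain ⟨t, ht⟩ := interior_dyadicIcc_nonempty (m + (D - m)) i
    have ht₀₁ : t ∈ Ioo 0 1 := interior_dyadicIcc_subset_Ioo hj (interior_mono hi ht)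
    have htJ : (t : AddCircle (1 : ℝ)) ∈ dyadicArc m j :=
      mem_image_of_mem _ (hi (interior_subset ht))
    rw [← hT, mem_iUnion₂] at htJ
    obtain ⟨k, hk, htk⟩ := htJ
    have hlev : (f k).1 ≤ m + (D - m) :=
      (Finset.le_sup (f := fun k => (f k).1) hk).trans (by omega)
    exact ⟨k, hk, dyadicIcc_subset_of_mem hlev ht ((coe_mem_dyadicArc_iff (hval k hk) ht₀₁).1 htk)⟩

theorem exists_shorter_chain (hw : IsSubadditiveWeight w)
    {N : ℕ} {c : Fin (N + 1) → ℕ × ℕ} {x y : AddCircle (1 : ℝ)} (hc : IsDyadicChain N c x y)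
    {T : Finset (Fin (N + 1))} (hT : 2 ≤ T.card) {m j : ℕ} (hj : j < 2 ^ m)
    (hTU : ⋃ k ∈ T, dyadicArc (c k).1 (c k).2 = dyadicArc m j) :
    ∃ K < N, ∃ c' : Fin (K + 1) → ℕ × ℕ, IsDyadicChain K c' x y ∧
      ∑ k, w (c' k).1 (c' k).2 ≤ ∑ k, w (c k).1 (c k).2 := by
  classical
  let g : Option ↥Tᶜ → ℕ × ℕ := fun o => o.elim (m, j) fun k => c k
  let e : Fin (Tᶜ.card + 1) ≃ Option ↥Tᶜ :=
    (Fintype.equivFinOfCardEq (by rw [Fintype.card_option, Fintype.card_coe])).symm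
  have hunion : ⋃ k, dyadicArc (g (e k)).1 (g (e k)).2 = ⋃ k, dyadicArc (c k).1 (c k).2 := by
    rw [e.surjective.iUnion_comp (fun o => dyadicArc (g o).1 (g o).2), iUnion_option]
    simp only [g, Option.elim, iUnion_subtype, Finset.mem_compl, ← hTU, ← iUnion_union_distrib]
    exact iUnion_congr fun k => by by_cases hk : k ∈ T <;> simp [hk]
  have hsum : ∑ k, w (g (e k)).1 (g (e k)).2 = w m j + ∑ k ∈ Tᶜ, w (c k).1 (c k).2 := by
    rw [e.sum_comp (fun o => w (g o).1 (g o).2), Fintype.sum_option]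
    simp only [g, Option.elim]
    rw [Finset.sum_coe_sort Tᶜ fun k => w (c k).1 (c k).2]
  refine ⟨Tᶜ.card, ?_, g ∘ e, ⟨fun k => ?_, ?_⟩, ?_⟩
  · have := T.card_le_univ
    rw [Finset.card_compl, Fintype.card_fin] at *
    omega
  · cases h : e k with
    | none => simpa [g, h] using hj
    | some k => simpa [g, h] using hc.1 k
  · simp only [Function.comp_apply, hunion]
    exact hc.2
  · simp only [Function.comp_apply, hsum]
    rw [← Finset.sum_add_sum_compl T]
    exact add_le_add (hw.le_sum_of_biUnion_eq hj (fun k _ => hc.1 k) hTU) le_rfl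

theorem exists_mem_minChainSums_le (hw : IsSubadditiveWeight w) (x y : AddCircle (1 : ℝ)) (N : ℕ)
    (c : Fin (N + 1) → ℕ × ℕ) (hc : IsDyadicChain N c x y) :
    ∃ s ∈ minChainSums w x y, s ≤ ∑ k, w (c k).1 (c k).2 := by
  induction N using Nat.strong_induction_on with
  | _ N ih =>
    by_cases hmin : IsMinimalChain N c
    · exact ⟨_, ⟨N, c, hc, hmin, rfl⟩, le_rfl⟩
    obtain ⟨T, hT, m, j, hj, hTU⟩ := exists_biUnion_eq_dyadicArc_of_not_isMinimalChain hc.1 hmin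
    obtain ⟨K, hK, c', hc', hle⟩ := hw.exists_shorter_chain hc hT hj hTU
    obtain ⟨s, hs, hs'⟩ := ih K hK c' hc'
    exact ⟨s, hs, hs'.trans hle⟩

theorem dOf_eq_sInf_minChainSums (hw : IsSubadditiveWeight w) (x y : AddCircle (1 : ℝ)) :
    dOf w x y = sInf (minChainSums w x y) := by
  have hsub : minChainSums w x y ⊆ chainSums w x y := fun s ⟨N, c, hc, _, hs⟩ => ⟨N, c, hc, hs⟩
  have hbdd : BddBelow (chainSums w x y) := ⟨0, by
    rintro s ⟨N, c, hc, rfl⟩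
    exact Finset.sum_nonneg fun k _ => hw.nonneg _ _ (hc.1 k)⟩
  have hne := minChainSums_nonempty w x y
  refine le_antisymm (csInf_le_csInf hbdd hne hsub) (le_csInf (hne.mono hsub) ?_)
  rintro s ⟨N, c, hc, rfl⟩
  obtain ⟨t, ht, hle⟩ := hw.exists_mem_minChainSums_le x y N c hc
  exact (csInf_le (hbdd.mono hsub) ht).trans hle

end IsSubadditiveWeight

theorem trunc_of_le {Δ : ℕ → ℕ → ℝ} {n m : ℕ} (j : ℕ) (h : n ≤ m) :
    trunc Δ n m j = Δ n (j / 2 ^ (m - n)) / 2 ^ (m - n) := by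
  unfold trunc
  split_ifs with h'
  · obtain rfl := le_antisymm h' h
    simp
  · rfl

theorem trunc_child {Δ : ℕ → ℕ → ℝ} {n m : ℕ} {j i : ℕ} (h : n ≤ m) (hi : i / 2 = j) :
    trunc Δ n (m + 1) i = trunc Δ n m j / 2 := by
  rw [trunc_of_le _ h, trunc_of_le _ (h.trans m.le_succ), show m + 1 - n = m - n + 1 by omega,
    pow_succ', ← Nat.div_div_eq_div_mul, hi]
  ring

end DyadicChain

open DyadicChain

theorem IsS1.isSubadditiveWeight {Δ : ℕ → ℕ → ℝ} (hΔ : IsS1 Δ) : IsSubadditiveWeight Δ where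
  nonneg m j hj := (hΔ.2.1 m j hj).le
  le_add m j hj := by
    obtain ⟨heq, hhalf | hsame⟩ := hΔ.2.2.1 m j hj
    · rw [← heq, hhalf]; linarith
    · rw [← heq, hsame]; linarith [hΔ.2.1 m j hj]

theorem IsS1.isSubadditiveWeight_trunc {Δ : ℕ → ℕ → ℝ} (hΔ : IsS1 Δ) (n : ℕ) :
    IsSubadditiveWeight (trunc Δ n) where
  nonneg m j hj := by
    rcases le_total m n with h | h
    · simpa [trunc, h] using (hΔ.2.1 m j hj).le
    · rw [trunc_of_le _ h]
      refine div_nonneg (hΔ.2.1 n _ ?_).le (by positivity)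
      rw [Nat.div_lt_iff_lt_mul (by positivity), ← pow_add, Nat.add_sub_cancel' h]
      exact hj
  le_add m j hj := by
    rcases lt_or_ge m n with h | h
    · simpa [trunc, h.le, Nat.succ_le_of_lt h] using hΔ.isSubadditiveWeight.le_add m j hj
    · rw [trunc_child h (by omega : 2 * j / 2 = j), trunc_child h (by omega : (2 * j + 1) / 2 = j)]
      linarith

/-- The infima defining `d_Δ(x,y)` and `d_n(x,y)` are unchanged by the assumption that the
chains of dyadic arcs used in these definitions are minimal. -/
theorem dOf_eq_inf_over_minimal_chains (Δ : ℕ → ℕ → ℝ) (hΔ : IsS1 Δ)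
    (x y : AddCircle (1 : ℝ)) :
    dOf Δ x y = sInf (minChainSums Δ x y) ∧
    ∀ n : ℕ, dOf (trunc Δ n) x y = sInf (minChainSums (trunc Δ n) x y) :=
  ⟨hΔ.isSubadditiveWeight.dOf_eq_sInf_minChainSums x y,
    fun n => (hΔ.isSubadditiveWeight_trunc n).dOf_eq_sInf_minChainSums x y⟩
end
end

section
/- Let {I_i}_{i=1}^N be a minimal chain of dyadic arcs in 𝕊 indexed so that for 1 ≤ i ≤ N−1 the right endpoint of I_i is the left endpoint of I_{i+1}. Then there is either a unique interval or a unique pair of adjacent intervals from {I_i}_{i=1}^N of maximal length 2^{-l(I_i)}. If i* denotes the index of such a maximal interval, then: if i* > 1, the level l(I_i) is strictly decreasing for i = 1,…,i*−1; and if i* < N, the level l(I_i) is strictly increasing for i = i*+1,…,N. -/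
noncomputable section

/-!
A dyadic arc of level `n ≥ 1` with even index is a left child: its right endpoint has exact
dyadic level `n` and its left endpoint a smaller one; for odd index it is the other way round.
Consecutive arcs of the chain share an endpoint. If the level does not drop from one arc to the
next, the next arc cannot be a right child, since then the two would be siblings, whose union is
their parent, which minimality forbids. Being a left child, its right endpoint forces the level of
the following arc to be at least as large, and equality would again produce siblings. So a weak
rise of the level is always followed by a strict one: the levels decrease strictly up to their
minimum, which is attained at one arc or at two consecutive arcs, and increase strictly after it.
-/

open Set Order

section

variable {ι β : Type*} [LinearOrder ι] [LinearOrder β]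

def StrictRiseAfterWeakRise (f : ι → β) : Prop :=
  ∀ ⦃a b c : ι⦄, a ⋖ b → b ⋖ c → f a ≤ f b → f b < f c

variable [SuccOrder ι] [IsSuccArchimedean ι] {f : ι → β}

namespace StrictRiseAfterWeakRise

theorem strictMonoOn_Ici (hf : StrictRiseAfterWeakRise f) {a b : ι} (hab : a ⋖ b)
    (hle : f a ≤ f b) : StrictMonoOn f (Ici b) := by
  suffices h : ∀ x, b ≤ x → ¬IsMax x → f x < f (succ x) from
    strictMonoOn_of_lt_succ ordConnected_Ici fun x hx hbx _ => h x hbx hx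
  intro x hbx hx
  induction hbx using Succ.rec with
  | rfl => exact hf hab (covBy_succ_of_not_isMax hx) hle
  | succ x _ ih =>
    have hx' : ¬IsMax x := fun h => hx (by rwa [succ_eq_iff_isMax.2 h])
    exact hf (covBy_succ_of_not_isMax hx') (covBy_succ_of_not_isMax hx) (ih hx').le

theorem strictMonoOn_Ioi (hf : StrictRiseAfterWeakRise f) {i : ι} (hi : ∀ k, f i ≤ f k) :
    StrictMonoOn f (Ioi i) := by
  by_cases hmax : IsMax i
  · simp [hmax.Ioi_eq, StrictMonoOn]
  · rw [← Ici_succ_of_not_isMax hmax]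
    exact hf.strictMonoOn_Ici (covBy_succ_of_not_isMax hmax) (hi _)

theorem strictAntiOn_Iio (hf : StrictRiseAfterWeakRise f) {i : ι} (hi : ∀ k, f i ≤ f k) :
    StrictAntiOn f (Iio i) := by
  refine strictAntiOn_of_succ_lt ordConnected_Iio fun x hx _ hxi => ?_
  by_contra! hle
  exact (hi _).not_gt <| hf.strictMonoOn_Ici (covBy_succ_of_not_isMax hx) hle
    self_mem_Ici (mem_Ici.2 hxi.le) hxi

theorem covBy_of_apply_eq (hf : StrictRiseAfterWeakRise f) {i k : ι} (hi : ∀ j, f i ≤ f j)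
    (hik : i < k) (hk : f k = f i) : i ⋖ k :=
  ⟨hik, fun m him hmk => (hi m).not_gt (hk ▸ hf.strictMonoOn_Ioi hi him hik hmk)⟩

theorem exists_forall_le_and_eq_or_covBy [Finite ι] [Nonempty ι]
    (hf : StrictRiseAfterWeakRise f) : ∃ i, (∀ k, f i ≤ f k) ∧ ∀ k, f k = f i → k = i ∨ i ⋖ k := by
  obtain ⟨m, hm⟩ := Finite.exists_min f
  obtain ⟨i, hi, hleast⟩ := wellFounded_lt.has_min {k | ∀ j, f k ≤ f j} ⟨m, hm⟩
  refine ⟨i, hi, fun k hk => ?_⟩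
  rcases (not_lt.1 (hleast k fun j => hk ▸ hi j)).eq_or_lt with h | h
  · exact Or.inl h.symm
  · exact Or.inr (hf.covBy_of_apply_eq hi h hk)

end StrictRiseAfterWeakRise

end

theorem dyadicArc_zero (j : ℕ) : dyadicArc 0 j = univ := by
  simp [dyadicArc]

theorem dyadicArc_union_sibling (n a : ℕ) :
    dyadicArc (n + 1) (2 * a) ∪ dyadicArc (n + 1) (2 * a + 1) = dyadicArc n a := by
  simp only [dyadicArc, ← image_union]
  push_cast
  rw [Icc_union_Icc_eq_Icc]
  · rw [pow_succ]
    congr 2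
    · field_simp
    · field_simp; ring
  · gcongr; linarith
  · gcongr; linarith

theorem Nat.le_of_odd_mul_two_pow_eq {a b m n : ℕ} (ha : Odd a) (h : a * 2 ^ m = b * 2 ^ n) :
    n ≤ m := by
  by_contra! hmn
  have hdvd : 2 ^ m * 2 ∣ 2 ^ m * a := by
    rw [← pow_succ, mul_comm, h]
    exact dvd_mul_of_dvd_right (pow_dvd_pow 2 hmn) b
  exact ha.not_two_dvd_nat (Nat.dvd_of_mul_dvd_mul_left (by positivity) hdvd)

theorem mul_two_pow_eq_or_of_rightPt_eq_leftPt {n j m j' : ℕ} (hj : j < 2 ^ n) (hj' : j' < 2 ^ m)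
    (h : rightPt n j = leftPt m j') :
    (j + 1) * 2 ^ m = j' * 2 ^ n ∨ (j + 1 = 2 ^ n ∧ j' = 0) := by
  have hmem : ∀ {i k : ℕ}, i < 2 ^ k → (i : ℝ) / 2 ^ k ∈ Ico (0 : ℝ) (0 + 1) := fun hi =>
    ⟨by positivity, by rw [zero_add, div_lt_one (by positivity)]; exact_mod_cast hi⟩
  rw [rightPt, leftPt, ← Nat.cast_succ] at h
  rcases (Nat.succ_le_of_lt hj).eq_or_lt with hwrap | hlt
  · rw [hwrap, Nat.cast_pow, Nat.cast_two, div_self (by positivity), AddCircle.coe_period,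
      ← AddCircle.coe_zero, AddCircle.coe_eq_coe_iff_of_mem_Ico (by simp) (hmem hj'),
      eq_comm, div_eq_zero_iff] at h
    exact Or.inr ⟨hwrap, by exact_mod_cast h.resolve_right (by positivity)⟩
  · rw [AddCircle.coe_eq_coe_iff_of_mem_Ico (hmem hlt) (hmem hj'),
      div_eq_div_iff (by positivity) (by positivity)] at h
    exact Or.inl (by exact_mod_cast h)

theorem level_le_of_odd_of_rightPt_eq_leftPt {n j m j' : ℕ} (hj : j < 2 ^ n) (hj' : j' < 2 ^ m)
    (h : rightPt n j = leftPt m j') (hodd : Odd j') : m ≤ n ∧ (m = n → j' = j + 1) := by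
  rcases mul_two_pow_eq_or_of_rightPt_eq_leftPt hj hj' h with heq | ⟨-, rfl⟩
  · refine ⟨Nat.le_of_odd_mul_two_pow_eq hodd heq.symm, fun hmn => ?_⟩
    subst hmn
    exact (Nat.eq_of_mul_eq_mul_right (Nat.two_pow_pos m) heq).symm
  · exact absurd hodd Nat.not_odd_zero

theorem level_le_of_even_of_rightPt_eq_leftPt {n j m j' : ℕ} (hj : j < 2 ^ n) (hj' : j' < 2 ^ m)
    (h : rightPt n j = leftPt m j') (hn : 0 < n) (heven : Even j) :
    n ≤ m ∧ (n = m → j' = j + 1) := by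
  rcases mul_two_pow_eq_or_of_rightPt_eq_leftPt hj hj' h with heq | ⟨hwrap, -⟩
  · refine ⟨Nat.le_of_odd_mul_two_pow_eq heven.add_one heq, fun hmn => ?_⟩
    subst hmn
    exact (Nat.eq_of_mul_eq_mul_right (Nat.two_pow_pos n) heq).symm
  · have : Even (j + 1) := hwrap ▸ (Nat.even_pow.2 ⟨even_two, hn.ne'⟩)
    exact absurd this (Nat.not_even_iff_odd.2 heven.add_one)

namespace IsMinimalChain

variable {N : ℕ} {c : Fin (N + 1) → ℕ × ℕ}

theorem level_pos (hmin : IsMinimalChain N c) {k l : Fin (N + 1)} (hkl : k ≠ l) : 0 < (c k).1 := by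
  refine Nat.pos_of_ne_zero fun h0 =>
    hmin.2 {k, l} (Finset.card_pair hkl).ge ⟨0, 0, by norm_num, ?_⟩
  rw [Finset.set_biUnion_insert, h0, dyadicArc_zero, univ_union, dyadicArc_zero]

theorem not_siblings (hmin : IsMinimalChain N c) {k l : Fin (N + 1)} (hkl : k ≠ l)
    (hl : (c l).2 < 2 ^ (c l).1) (hpos : 0 < (c k).1) (hlev : (c l).1 = (c k).1)
    (heven : Even (c k).2) (hsucc : (c l).2 = (c k).2 + 1) : False := by
  obtain ⟨n, hn⟩ := Nat.exists_eq_add_one_of_ne_zero hpos.ne'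
  obtain ⟨a, ha⟩ := heven
  refine hmin.2 {k, l} (Finset.card_pair hkl).ge ⟨n, a, ?_, ?_⟩
  · rw [hlev, hn, hsucc, ha, pow_succ] at hl; omega
  · rw [Finset.set_biUnion_insert, Finset.set_biUnion_singleton, hlev, hn, hsucc, ha, ← two_mul,
      dyadicArc_union_sibling]

theorem level_lt_of_le (hmin : IsMinimalChain N c) (hvalid : ∀ k, (c k).2 < 2 ^ (c k).1)
    (hadj : ∀ a b, a ⋖ b → rightPt (c a).1 (c a).2 = leftPt (c b).1 (c b).2)
    {a b d : Fin (N + 1)} (hab : a ⋖ b) (hbd : b ⋖ d) (hle : (c a).1 ≤ (c b).1) :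
    (c b).1 < (c d).1 := by
  have hpos : 0 < (c b).1 := hmin.level_pos hab.ne'
  have heven : Even (c b).2 := by
    by_contra hodd
    rw [Nat.not_even_iff_odd] at hodd
    obtain ⟨hge, hsucc⟩ :=
      level_le_of_odd_of_rightPt_eq_leftPt (hvalid a) (hvalid b) (hadj a b hab) hodd
    have hlev : (c b).1 = (c a).1 := hge.antisymm hle
    refine hmin.not_siblings hab.ne (hvalid b) (hlev ▸ hpos) hlev ?_ (hsucc hlev)
    rw [hsucc hlev] at hodd
    exact Nat.not_odd_iff_even.1 (Nat.odd_add_one.1 hodd)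
  obtain ⟨hle', hsucc⟩ :=
    level_le_of_even_of_rightPt_eq_leftPt (hvalid b) (hvalid d) (hadj b d hbd) hpos heven
  exact hle'.lt_of_ne fun hlev =>
    hmin.not_siblings hbd.ne (hvalid d) hpos hlev.symm heven (hsucc hlev)

end IsMinimalChain

theorem Fin.exists_castSucc_eq_and_succ_eq_of_covBy {n : ℕ} {a b : Fin (n + 1)} (h : a ⋖ b) :
    ∃ i : Fin n, i.castSucc = a ∧ i.succ = b := by
  rw [Fin.covBy_iff, Nat.covBy_iff_add_one_eq] at h
  exact ⟨⟨a, by omega⟩, rfl, Fin.ext h⟩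

/-- Structure of minimal chains: in a minimal chain of dyadic arcs, indexed so that the right
endpoint of each arc is the left endpoint of the next, there is either a unique arc or a
unique pair of adjacent arcs of maximal length (i.e. of minimal level); moreover, for any
index `istar` of an arc of maximal length, the levels are strictly decreasing before `istar`
and strictly increasing after `istar`. -/
theorem minimalChain_structure (N : ℕ) (c : Fin (N + 1) → ℕ × ℕ)
    (hvalid : ∀ k, (c k).2 < 2 ^ (c k).1)
    (hmin : IsMinimalChain N c)
    (hadj : ∀ i : Fin N,
      rightPt (c i.castSucc).1 (c i.castSucc).2 = leftPt (c i.succ).1 (c i.succ).2) :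
    ((∃ i₀ : Fin (N + 1), (∀ k, (c i₀).1 ≤ (c k).1) ∧
        ((∀ k, (c k).1 = (c i₀).1 → k = i₀) ∨
          ∃ i₁ : Fin (N + 1), (i₁ : ℕ) = (i₀ : ℕ) + 1 ∧ (c i₁).1 = (c i₀).1 ∧
            ∀ k, (c k).1 = (c i₀).1 → k = i₀ ∨ k = i₁))) ∧
    ∀ istar : Fin (N + 1), (∀ k, (c istar).1 ≤ (c k).1) →
      (∀ k l : Fin (N + 1), k < l → (l : ℕ) < (istar : ℕ) → (c l).1 < (c k).1) ∧
      (∀ k l : Fin (N + 1), (istar : ℕ) < (k : ℕ) → k < l → (c k).1 < (c l).1) := by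
  have hcov : ∀ a b, a ⋖ b → rightPt (c a).1 (c a).2 = leftPt (c b).1 (c b).2 := by
    intro a b hab
    obtain ⟨i, rfl, rfl⟩ := Fin.exists_castSucc_eq_and_succ_eq_of_covBy hab
    exact hadj i
  have hf : StrictRiseAfterWeakRise fun k => (c k).1 := fun _ _ _ hab hbd hle =>
    hmin.level_lt_of_le hvalid hcov hab hbd hle
  refine ⟨?_, fun istar hstar =>
    ⟨fun k l hkl hl => hf.strictAntiOn_Iio hstar (hkl.trans hl) hl hkl,
      fun k l hk hkl => hf.strictMonoOn_Ioi hstar hk (hk.trans hkl) hkl⟩⟩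
  obtain ⟨i₀, hi₀, hmins⟩ := hf.exists_forall_le_and_eq_or_covBy
  refine ⟨i₀, hi₀, ?_⟩
  by_cases hpair : ∃ i₁ : Fin (N + 1), (i₁ : ℕ) = i₀ + 1 ∧ (c i₁).1 = (c i₀).1
  · obtain ⟨i₁, hi₁, hlev⟩ := hpair
    refine Or.inr ⟨i₁, hi₁, hlev, fun k hk => (hmins k hk).imp_right fun hk₀ => Fin.ext ?_⟩
    rw [Fin.covBy_iff, Nat.covBy_iff_add_one_eq] at hk₀
    omega
  · refine Or.inl fun k hk => (hmins k hk).resolve_right fun hk₀ => hpair ⟨k, ?_, hk⟩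
    rw [Fin.covBy_iff, Nat.covBy_iff_add_one_eq] at hk₀
    exact hk₀.symm
end
end

section
/- For all x, y ∈ 𝕊 and every n ∈ ℕ, d_Δ(x,y) ≤ d_n(x,y) + 2·max{Δ(I) : I ∈ ℐ_n}. In particular, d_n(x,y) → d_Δ(x,y) as n → ∞. -/
noncomputable section

/-!
Given a chain for `Δₙ`, replace each arc of level `> n` by its level-`n` ancestor, unless that
ancestor already lies in a kept arc of level `≤ n`; the result is a chain for `Δ`. If an
ancestor's arc lies in the union `U` of the old chain, it is covered up to endpoints by its
descendants in the chain, and since `Δₙ` halves at each level below `n`, comparing lengths shows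
that these descendants already paid `Δ` of the ancestor. Every other ancestor's open arc meets both
`U` and its complement, so it contains a frontier point of the connected set `U ⊆ 𝕊`; there are at
most two such points, so these ancestors cost at most `2 · max Δ(ℐₙ)`. Conversely `Δₙ ≤ Δ`, so
`dₙ ≤ d_Δ`, and the convergence follows from `max Δ(ℐₙ) → 0`.
-/

open Set

local notation "𝕊" => AddCircle (1 : ℝ)

theorem IsPreconnected.inter_frontier_nonempty {X : Type*} [TopologicalSpace X] {s t : Set X}
    (hs : IsPreconnected s) (hin : (s ∩ t).Nonempty) (hout : (s \ t).Nonempty) :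
    (s ∩ frontier t).Nonempty := by
  by_contra h
  have hsub : s ⊆ interior t ∪ (closure t)ᶜ := fun z hz => by
    by_contra hz'
    simp only [mem_union, mem_compl_iff, not_or, not_not] at hz'
    exact h ⟨z, hz, hz'.2, hz'.1⟩
  rcases hs.subset_or_subset isOpen_interior isClosed_closure.isOpen_compl
    (disjoint_compl_right.mono_left interior_subset_closure) hsub with h' | h'
  · obtain ⟨z, hz, hzt⟩ := hout
    exact hzt (interior_subset (h' hz))
  · obtain ⟨z, hz, hzt⟩ := hin
    exact h' hz (subset_closure hzt)

theorem IsConnected.union_biUnion {X ι : Type*} [TopologicalSpace X] {U : Set X} {t : Set ι}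
    {s : ι → Set X} (hU : IsConnected U) (hs : ∀ i ∈ t, IsConnected (s i))
    (hsU : ∀ i ∈ t, (s i ∩ U).Nonempty) : IsConnected (U ∪ ⋃ i ∈ t, s i) := by
  obtain ⟨x, hx⟩ := hU.nonempty
  refine ⟨⟨x, Or.inl hx⟩, isPreconnected_of_forall x fun y hy => ?_⟩
  rcases hy with hy | hy
  · exact ⟨U, subset_union_left, hx, hy, hU.2⟩
  · obtain ⟨i, hi, hyi⟩ := mem_iUnion₂.1 hy
    exact ⟨s i ∪ U, union_subset (subset_union_of_subset_right (subset_biUnion_of_mem hi) _)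
      subset_union_left, Or.inr hx, Or.inl hyi, ((hs i hi).union (hsU i hi) hU).2⟩

namespace AddCircle

variable {T : ℝ} [Fact (0 < T)]

/-- Cutting the circle at a point outside `U` turns `U` into an interval of `ℝ`, whose
frontier consists of its two endpoints. -/
theorem exists_frontier_subset_pair {U : Set (AddCircle T)} (hU : IsPreconnected U) :
    ∃ a b : AddCircle T, frontier U ⊆ {a, b} := by
  rcases U.eq_empty_or_nonempty with rfl | hne
  · exact ⟨0, 0, by simp⟩
  by_cases huniv : U = univ
  · exact ⟨0, 0, by simp [huniv]⟩
  obtain ⟨q, hq⟩ := (ne_univ_iff_exists_notMem U).1 huniv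
  obtain ⟨t, rfl⟩ := QuotientAddGroup.mk_surjective q
  set f : AddCircle T → ℝ := fun z => equivIoc T t z
  have hf : ContinuousOn f U := fun z hz =>
    (continuous_subtype_val.continuousAt.comp
      (continuousAt_equivIoc T t (ne_of_mem_of_not_mem hz hq))).continuousWithinAt
  set S := f '' U
  have hUS : U = (↑) '' S := by
    rw [image_image]
    simp [f, coe_equivIoc]
  have hS : IsConnected S := ⟨hne.image f, hU.image f hf⟩
  have hS_sub : S ⊆ Icc t (t + T) := image_subset_iff.2 fun z _ =>
    Ioc_subset_Icc_self (equivIoc T t z).2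
  have hbdd : BddBelow S := ⟨t, fun s hs => (hS_sub hs).1⟩
  have hbdd' : BddAbove S := ⟨t + T, fun s hs => (hS_sub hs).2⟩
  refine ⟨(sInf S : ℝ), (sSup S : ℝ), fun z hz => ?_⟩
  have hcl : closure U ⊆ (↑) '' Icc (sInf S) (sSup S) :=
    closure_minimal (hUS ▸ image_mono (subset_Icc_csInf_csSup hbdd hbdd'))
      (isCompact_Icc.image (AddCircle.continuous_mk' T)).isClosed
  have hint : (↑) '' Ioo (sInf S) (sSup S) ⊆ interior U :=
    interior_maximal (hUS ▸ image_mono (hS.Ioo_csInf_csSup_subset hbdd hbdd'))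
      (QuotientAddGroup.isOpenMap_coe _ isOpen_Ioo)
  obtain ⟨s, hs, rfl⟩ := hcl hz.1
  rcases eq_endpoints_or_mem_Ioo_of_mem_Icc hs with rfl | rfl | hs'
  · exact Or.inl rfl
  · exact Or.inr rfl
  · exact absurd (hint ⟨s, hs', rfl⟩) hz.2

theorem card_le_two_of_pairwiseDisjoint {ι : Type*} {s : Finset ι} {U : Set (AddCircle T)}
    {V : ι → Set (AddCircle T)} (hU : IsPreconnected U) (hV : ∀ i ∈ s, IsPreconnected (V i))
    (hdisj : (s : Set ι).PairwiseDisjoint V) (hin : ∀ i ∈ s, (V i ∩ U).Nonempty)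
    (hout : ∀ i ∈ s, (V i \ U).Nonempty) : s.card ≤ 2 := by
  classical
  obtain ⟨a, b, hab⟩ := exists_frontier_subset_pair hU
  choose! z hzV hzU using fun i hi => (hV i hi).inter_frontier_nonempty (hin i hi) (hout i hi)
  calc s.card ≤ ({a, b} : Finset (AddCircle T)).card :=
        Finset.card_le_card_of_injOn z (fun i hi => by simpa using hab (hzU i hi))
          fun i hi j hj h => hdisj.elim hi hj
            (not_disjoint_iff.2 ⟨z i, hzV i hi, h ▸ hzV j hj⟩)
  _ ≤ 2 := Finset.card_le_two

end AddCircle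

def dyadicIcc (n j : ℕ) : Set ℝ := Icc ((j : ℝ) / 2 ^ n) (((j : ℝ) + 1) / 2 ^ n)

def dyadicIoo (n j : ℕ) : Set ℝ := Ioo ((j : ℝ) / 2 ^ n) (((j : ℝ) + 1) / 2 ^ n)

def openDyadicArc (n j : ℕ) : Set 𝕊 := (↑) '' dyadicIoo n j

theorem dyadicArc_eq_image (n j : ℕ) : dyadicArc n j = (↑) '' dyadicIcc n j := rfl

theorem dyadic_left_lt_right (n j : ℕ) : (j : ℝ) / 2 ^ n < ((j : ℝ) + 1) / 2 ^ n := by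
  gcongr
  linarith

theorem dyadicIoo_nonempty (n j : ℕ) : (dyadicIoo n j).Nonempty :=
  nonempty_Ioo.2 (dyadic_left_lt_right n j)

theorem dyadicIcc_subset_Icc {n j : ℕ} (hj : j < 2 ^ n) : dyadicIcc n j ⊆ Icc 0 1 := by
  have hj' : (j : ℝ) + 1 ≤ 2 ^ n := by exact_mod_cast hj
  exact Icc_subset_Icc (by positivity) ((div_le_one (by positivity)).2 hj')

theorem dyadicIoo_subset_Ioo {n j : ℕ} (hj : j < 2 ^ n) : dyadicIoo n j ⊆ Ioo 0 1 := by
  have hj' : (j : ℝ) + 1 ≤ 2 ^ n := by exact_mod_cast hj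
  exact Ioo_subset_Ioo (by positivity) ((div_le_one (by positivity)).2 hj')

theorem dyadic_ancestor_bounds {n m : ℕ} (hnm : n ≤ m) (i : ℕ) :
    ((i / 2 ^ (m - n) : ℕ) : ℝ) / 2 ^ n ≤ (i : ℝ) / 2 ^ m ∧
      ((i : ℝ) + 1) / 2 ^ m ≤ (((i / 2 ^ (m - n) : ℕ) : ℝ) + 1) / 2 ^ n := by
  set d := m - n
  have hm : (2 : ℝ) ^ m = 2 ^ n * 2 ^ d := by rw [← pow_add, Nat.add_sub_cancel' hnm]
  have h₁ : ((i / 2 ^ d : ℕ) : ℝ) * 2 ^ d ≤ i := by exact_mod_cast Nat.div_mul_le_self i _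
  have h₂ : (i : ℝ) + 1 ≤ 2 ^ d * ((i / 2 ^ d : ℕ) + 1) := by
    exact_mod_cast Nat.lt_mul_div_succ i (by positivity : 0 < 2 ^ d)
  rw [hm, div_le_div_iff₀ (by positivity) (by positivity),
    div_le_div_iff₀ (by positivity) (by positivity)]
  constructor <;> nlinarith [pow_pos (two_pos : (0 : ℝ) < 2) n]

theorem dyadicIcc_subset_ancestor {n m : ℕ} (hnm : n ≤ m) (i : ℕ) :
    dyadicIcc m i ⊆ dyadicIcc n (i / 2 ^ (m - n)) :=
  Icc_subset_Icc (dyadic_ancestor_bounds hnm i).1 (dyadic_ancestor_bounds hnm i).2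

theorem dyadicIoo_subset_ancestor {n m : ℕ} (hnm : n ≤ m) (i : ℕ) :
    dyadicIoo m i ⊆ dyadicIoo n (i / 2 ^ (m - n)) :=
  Ioo_subset_Ioo (dyadic_ancestor_bounds hnm i).1 (dyadic_ancestor_bounds hnm i).2

theorem Nat.div_two_pow_sub_eq_of_lt_of_lt {m n i j : ℕ} (hmn : m ≤ n)
    (h₁ : i * 2 ^ n < (j + 1) * 2 ^ m) (h₂ : j * 2 ^ m < (i + 1) * 2 ^ n) :
    j / 2 ^ (n - m) = i := by
  have hn : 2 ^ n = 2 ^ (n - m) * 2 ^ m := by rw [← pow_add, Nat.sub_add_cancel hmn]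
  rw [hn, ← mul_assoc] at h₁ h₂
  have h₁' := Nat.lt_of_mul_lt_mul_right h₁
  have h₂' := Nat.lt_of_mul_lt_mul_right h₂
  exact Nat.div_eq_of_lt_le (Nat.le_of_lt_succ h₁') h₂'

theorem dyadic_cross_lt {m i n j : ℕ} (h : (dyadicIcc m i ∩ dyadicIoo n j).Nonempty) :
    i * 2 ^ n < (j + 1) * 2 ^ m ∧ j * 2 ^ m < (i + 1) * 2 ^ n := by
  obtain ⟨t, ⟨hti, hti'⟩, htj, htj'⟩ := h
  have h₁ := hti.trans_lt htj'
  have h₂ := htj.trans_le hti'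
  rw [div_lt_div_iff₀ (by positivity) (by positivity)] at h₁ h₂
  exact ⟨by exact_mod_cast h₁, by exact_mod_cast h₂⟩

theorem coe_eq_coe_of_mem_Icc_of_mem_Ioo {s t : ℝ} (hs : s ∈ Icc (0 : ℝ) 1)
    (ht : t ∈ Ioo (0 : ℝ) 1) (h : (s : 𝕊) = t) : s = t := by
  rcases le_total s t with hst | hst
  · exact (AddCircle.coe_eq_coe_iff_of_mem_Ico (a := s) ⟨le_rfl, by linarith [ht.2, hs.1]⟩
      ⟨hst, by linarith [ht.2, hs.1]⟩).1 h
  · exact (AddCircle.coe_eq_coe_iff_of_mem_Ico (a := t) ⟨hst, by linarith [ht.1, hs.2]⟩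
      ⟨le_rfl, by linarith [ht.1, hs.2]⟩).1 h

theorem mem_dyadicIcc_of_coe_mem {m i : ℕ} (hi : i < 2 ^ m) {t : ℝ} (ht : t ∈ Ioo (0 : ℝ) 1)
    (h : (t : 𝕊) ∈ dyadicArc m i) : t ∈ dyadicIcc m i := by
  obtain ⟨s, hs, hst⟩ := h
  rwa [← coe_eq_coe_of_mem_Icc_of_mem_Ioo (dyadicIcc_subset_Icc hi hs) ht hst]

theorem openDyadicArc_subset_dyadicArc (n j : ℕ) : openDyadicArc n j ⊆ dyadicArc n j :=
  image_mono Ioo_subset_Icc_self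

theorem openDyadicArc_disjoint {n i j : ℕ} (hi : i < 2 ^ n) (hj : j < 2 ^ n) (hij : i ≠ j) :
    Disjoint (openDyadicArc n i) (openDyadicArc n j) := by
  refine disjoint_left.2 ?_
  rintro _ ⟨s, hs, rfl⟩ hsj
  have hsj' := mem_dyadicIcc_of_coe_mem hj (dyadicIoo_subset_Ioo hi hs)
    (openDyadicArc_subset_dyadicArc n j hsj)
  obtain ⟨h₁, h₂⟩ := dyadic_cross_lt ⟨s, hsj', hs⟩
  exact hij (by simpa using Nat.div_two_pow_sub_eq_of_lt_of_lt le_rfl h₁ h₂)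

theorem dyadicArc_subset_ancestor {n m : ℕ} (hnm : n ≤ m) (i : ℕ) :
    dyadicArc m i ⊆ dyadicArc n (i / 2 ^ (m - n)) :=
  image_mono (dyadicIcc_subset_ancestor hnm i)

theorem openDyadicArc_subset_ancestor {n m : ℕ} (hnm : n ≤ m) (i : ℕ) :
    openDyadicArc m i ⊆ openDyadicArc n (i / 2 ^ (m - n)) :=
  image_mono (dyadicIoo_subset_ancestor hnm i)

theorem openDyadicArc_nonempty (n j : ℕ) : (openDyadicArc n j).Nonempty :=
  (dyadicIoo_nonempty n j).image _

theorem isConnected_dyadicArc (n j : ℕ) : IsConnected (dyadicArc n j) :=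
  (isConnected_Icc (dyadic_left_lt_right n j).le).image _
    (AddCircle.continuous_mk' 1).continuousOn

theorem isPreconnected_openDyadicArc (n j : ℕ) : IsPreconnected (openDyadicArc n j) :=
  (isPreconnected_Ioo).image _ (AddCircle.continuous_mk' 1).continuousOn

theorem isClosed_dyadicArc (n j : ℕ) : IsClosed (dyadicArc n j) :=
  (isCompact_Icc.image (AddCircle.continuous_mk' 1)).isClosed

theorem dyadicArc_subset_closure_openDyadicArc (n j : ℕ) :
    dyadicArc n j ⊆ closure (openDyadicArc n j) := by
  rw [dyadicArc_eq_image, dyadicIcc, ← closure_Ioo (dyadic_left_lt_right n j).ne]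
  exact image_closure_subset_closure_image (AddCircle.continuous_mk' 1)

theorem dyadicArc_zero_zero : dyadicArc 0 0 = univ := by
  refine eq_univ_of_forall fun z => ?_
  obtain ⟨t, ht, rfl⟩ := AddCircle.eq_coe_Ico z
  exact ⟨t, by simpa using Ico_subset_Icc_self ht, rfl⟩

theorem Nat.div_two_pow_sub_lt {n m j : ℕ} (hnm : n ≤ m) (hj : j < 2 ^ m) :
    j / 2 ^ (m - n) < 2 ^ n :=
  Nat.div_lt_of_lt_mul (by rwa [← pow_add, Nat.sub_add_cancel hnm])

theorem IsS1.pos {Δ : ℕ → ℕ → ℝ} (hΔ : IsS1 Δ) {n j : ℕ} (hj : j < 2 ^ n) : 0 < Δ n j :=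
  hΔ.2.1 n j hj

theorem IsS1.div_two_le_succ {Δ : ℕ → ℕ → ℝ} (hΔ : IsS1 Δ) {n j : ℕ} (hj : j < 2 ^ (n + 1)) :
    Δ n (j / 2) / 2 ≤ Δ (n + 1) j := by
  have hj2 : j / 2 < 2 ^ n := by rw [pow_succ] at hj; omega
  obtain ⟨heq, hchild⟩ := hΔ.2.2.1 n (j / 2) hj2
  have hsib : Δ (n + 1) j = Δ (n + 1) (2 * (j / 2)) := by
    rcases Nat.even_or_odd j with hk | hk
    · rw [Nat.two_mul_div_two_of_even hk]
    · rw [heq, Nat.two_mul_div_two_add_one_of_odd hk]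
  rw [hsib]
  rcases hchild with h | h
  · exact h.ge
  · rw [h]
    exact half_le_self (hΔ.pos hj2).le

theorem IsS1.div_two_pow_le {Δ : ℕ → ℕ → ℝ} (hΔ : IsS1 Δ) (n d : ℕ) {j : ℕ}
    (hj : j < 2 ^ (n + d)) : Δ n (j / 2 ^ d) / 2 ^ d ≤ Δ (n + d) j := by
  induction d generalizing j with
  | zero => simp
  | succ d ih =>
    have hj2 : j / 2 < 2 ^ (n + d) := by rw [← add_assoc, pow_succ] at hj; omega
    calc Δ n (j / 2 ^ (d + 1)) / 2 ^ (d + 1) = Δ n (j / 2 / 2 ^ d) / 2 ^ d / 2 := by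
          rw [pow_succ, pow_succ, Nat.div_div_eq_div_mul, div_div, mul_comm 2]
    _ ≤ Δ (n + d) (j / 2) / 2 := by gcongr; exact ih hj2
    _ ≤ Δ (n + (d + 1)) j := hΔ.div_two_le_succ hj

theorem trunc_of_le {Δ : ℕ → ℕ → ℝ} {n m j : ℕ} (h : m ≤ n) : trunc Δ n m j = Δ m j :=
  if_pos h

theorem trunc_of_lt {Δ : ℕ → ℕ → ℝ} {n m j : ℕ} (h : n < m) :
    trunc Δ n m j = Δ n (j / 2 ^ (m - n)) / 2 ^ (m - n) :=
  if_neg h.not_ge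

theorem IsS1.trunc_pos {Δ : ℕ → ℕ → ℝ} (hΔ : IsS1 Δ) (n : ℕ) {m j : ℕ} (hj : j < 2 ^ m) :
    0 < trunc Δ n m j := by
  rcases le_or_gt m n with h | h
  · rw [trunc_of_le h]
    exact hΔ.pos hj
  · rw [trunc_of_lt h]
    exact div_pos (hΔ.pos (Nat.div_two_pow_sub_lt h.le hj)) (by positivity)

theorem IsS1.trunc_le {Δ : ℕ → ℕ → ℝ} (hΔ : IsS1 Δ) (n : ℕ) {m j : ℕ} (hj : j < 2 ^ m) :
    trunc Δ n m j ≤ Δ m j := by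
  rcases le_or_gt m n with h | h
  · exact (trunc_of_le h).le
  · obtain ⟨d, rfl⟩ := Nat.exists_eq_add_of_lt h
    rw [trunc_of_lt h, show n + d + 1 - n = d + 1 by omega]
    exact hΔ.div_two_pow_le n (d + 1) (by rwa [← add_assoc])

def arcUnion (C : Finset (ℕ × ℕ)) : Set 𝕊 := ⋃ p ∈ C, dyadicArc p.1 p.2

/-- `IsDyadicChain` for a finite set of arcs instead of a `Fin`-indexed list; the sum over the
set is at most the sum over any list enumerating it. -/
def IsArcChain (C : Finset (ℕ × ℕ)) (x y : 𝕊) : Prop :=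
  (∀ p ∈ C, p.2 < 2 ^ p.1) ∧ IsConnected (arcUnion C) ∧ x ∈ arcUnion C ∧ y ∈ arcUnion C

theorem IsDyadicChain.isArcChain_image {N : ℕ} {c : Fin (N + 1) → ℕ × ℕ} {x y : 𝕊}
    (hc : IsDyadicChain N c x y) : IsArcChain (Finset.univ.image c) x y := by
  have hU : arcUnion (Finset.univ.image c) = ⋃ k, dyadicArc (c k).1 (c k).2 := by
    simp [arcUnion]
  obtain ⟨hval, hconn, hx, hy⟩ := hc
  refine ⟨?_, hU ▸ hconn, hU ▸ hx, hU ▸ hy⟩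
  simpa using hval

theorem chainSums_nonempty (Δ' : ℕ → ℕ → ℝ) (x y : 𝕊) : (chainSums Δ' x y).Nonempty := by
  have hU : (⋃ _ : Fin 1, dyadicArc 0 0) = univ := by rw [iUnion_const, dyadicArc_zero_zero]
  exact ⟨_, 0, fun _ => (0, 0), ⟨fun _ => by simp, by simpa [hU] using isConnected_univ,
    by simp [hU], by simp [hU]⟩, rfl⟩

theorem chainSums_bddBelow {Δ' : ℕ → ℕ → ℝ} (h : ∀ m j, j < 2 ^ m → 0 ≤ Δ' m j) (x y : 𝕊) :
    BddBelow (chainSums Δ' x y) := by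
  refine ⟨0, ?_⟩
  rintro _ ⟨N, c, hc, rfl⟩
  exact Finset.sum_nonneg fun k _ => h _ _ (hc.1 k)

theorem le_dOf {Δ' : ℕ → ℕ → ℝ} {x y : 𝕊} {a : ℝ}
    (h : ∀ N c, IsDyadicChain N c x y → a ≤ ∑ k, Δ' (c k).1 (c k).2) : a ≤ dOf Δ' x y := by
  refine le_csInf (chainSums_nonempty Δ' x y) ?_
  rintro _ ⟨N, c, hc, rfl⟩
  exact h N c hc

theorem dOf_le_sum {Δ' : ℕ → ℕ → ℝ} (h : ∀ m j, j < 2 ^ m → 0 ≤ Δ' m j) {x y : 𝕊}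
    {C : Finset (ℕ × ℕ)} (hC : IsArcChain C x y) : dOf Δ' x y ≤ ∑ p ∈ C, Δ' p.1 p.2 := by
  obtain ⟨hval, hconn, hx, hy⟩ := hC
  have hpos : 0 < C.card := by
    obtain ⟨p, hp, -⟩ := mem_iUnion₂.1 hx
    exact Finset.card_pos.2 ⟨p, hp⟩
  set e : Fin (C.card - 1 + 1) ≃ C := (finCongr (Nat.sub_add_cancel hpos)).trans C.equivFin.symm
  have hU : (⋃ k, dyadicArc (e k).1.1 (e k).1.2) = arcUnion C := by
    rw [e.surjective.iUnion_comp (fun p : C => dyadicArc p.1.1 p.1.2), arcUnion, iUnion_subtype]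
  refine csInf_le (chainSums_bddBelow h x y) ⟨C.card - 1, fun k => (e k).1,
    ⟨fun k => hval _ (e k).2, hU ▸ hconn, hU ▸ hx, hU ▸ hy⟩, ?_⟩
  rw [e.sum_comp (fun p : C => Δ' p.1.1 p.1.2), Finset.sum_coe_sort C (fun p => Δ' p.1 p.2)]

theorem dOf_mono {Δ₁ Δ₂ : ℕ → ℕ → ℝ} (h₀ : ∀ m j, j < 2 ^ m → 0 ≤ Δ₁ m j)
    (h : ∀ m j, j < 2 ^ m → Δ₁ m j ≤ Δ₂ m j) (x y : 𝕊) : dOf Δ₁ x y ≤ dOf Δ₂ x y :=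
  le_dOf fun N c hc => (csInf_le (chainSums_bddBelow h₀ x y) ⟨N, c, hc, rfl⟩).trans
    (Finset.sum_le_sum fun k _ => h _ _ (hc.1 k))

open MeasureTheory in
theorem one_div_two_pow_le_sum_of_dyadicIoo_subset {n j : ℕ} {F : Finset (ℕ × ℕ)}
    (h : dyadicIoo n j ⊆ ⋃ p ∈ F, dyadicIcc p.1 p.2) :
    (1 : ℝ) / 2 ^ n ≤ ∑ p ∈ F, (1 : ℝ) / 2 ^ p.1 := by
  have hlen : ∀ m i : ℕ, ((i : ℝ) + 1) / 2 ^ m - i / 2 ^ m = 1 / 2 ^ m := fun _ _ => by ring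
  have hcpt : IsCompact (⋃ p ∈ F, dyadicIcc p.1 p.2) :=
    F.isCompact_biUnion fun _ _ => isCompact_Icc
  calc (1 : ℝ) / 2 ^ n = volume.real (dyadicIoo n j) := by
        rw [dyadicIoo, Real.volume_real_Ioo_of_le (dyadic_left_lt_right n j).le, hlen]
  _ ≤ volume.real (⋃ p ∈ F, dyadicIcc p.1 p.2) :=
        measureReal_mono h hcpt.measure_ne_top
  _ ≤ ∑ p ∈ F, volume.real (dyadicIcc p.1 p.2) :=
        measureReal_biUnion_finset_le F _
  _ = ∑ p ∈ F, (1 : ℝ) / 2 ^ p.1 := Finset.sum_congr rfl fun p _ => by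
        rw [dyadicIcc, Real.volume_real_Icc_of_le (dyadic_left_lt_right _ _).le, hlen]

/-- The index of the level-`n` dyadic arc containing the arc `p`, when `n ≤ p.1`. -/
def ancestorIndex (n : ℕ) (p : ℕ × ℕ) : ℕ := p.2 / 2 ^ (p.1 - n)

open scoped Classical in
def newAncestors (n : ℕ) (C : Finset (ℕ × ℕ)) : Finset ℕ :=
  ((C.filter fun p => n < p.1).image (ancestorIndex n)).filter
    fun j => ¬∃ q ∈ C, q.1 ≤ n ∧ dyadicArc n j ⊆ dyadicArc q.1 q.2

/-- The chain obtained from `C` by replacing every arc deeper than level `n` with its level-`n`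
ancestor, unless that ancestor already lies inside an arc of `C` of level `≤ n`. -/
def coarsen (n : ℕ) (C : Finset (ℕ × ℕ)) : Finset (ℕ × ℕ) :=
  C.filter (fun p => p.1 ≤ n) ∪ (newAncestors n C).image (n, ·)

section Coarsen

variable {n : ℕ} {C : Finset (ℕ × ℕ)}

theorem mem_newAncestors {j : ℕ} : j ∈ newAncestors n C ↔
    (∃ p ∈ C, n < p.1 ∧ ancestorIndex n p = j) ∧
      ¬∃ q ∈ C, q.1 ≤ n ∧ dyadicArc n j ⊆ dyadicArc q.1 q.2 := by
  simp [newAncestors, and_assoc]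

theorem lt_of_mem_newAncestors (hC : ∀ p ∈ C, p.2 < 2 ^ p.1) {j : ℕ}
    (hj : j ∈ newAncestors n C) : j < 2 ^ n := by
  obtain ⟨⟨p, hp, hnp, rfl⟩, -⟩ := mem_newAncestors.1 hj
  exact Nat.div_two_pow_sub_lt hnp.le (hC p hp)

theorem arcUnion_subset_arcUnion_coarsen : arcUnion C ⊆ arcUnion (coarsen n C) := by
  refine iUnion₂_subset fun p hp z hz => ?_
  simp only [arcUnion, coarsen, mem_iUnion₂, Finset.mem_union, Finset.mem_filter,
    Finset.mem_image]
  rcases le_or_gt p.1 n with hpn | hnp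
  · exact ⟨p, Or.inl ⟨hp, hpn⟩, hz⟩
  have hz' := dyadicArc_subset_ancestor hnp.le p.2 hz
  by_cases hcov : ∃ q ∈ C, q.1 ≤ n ∧ dyadicArc n (ancestorIndex n p) ⊆ dyadicArc q.1 q.2
  · obtain ⟨q, hq, hqn, hsub⟩ := hcov
    exact ⟨q, Or.inl ⟨hq, hqn⟩, hsub hz'⟩
  · exact ⟨(n, ancestorIndex n p),
      Or.inr ⟨_, mem_newAncestors.2 ⟨⟨p, hp, hnp, rfl⟩, hcov⟩, rfl⟩, hz'⟩

theorem IsArcChain.coarsen {x y : 𝕊} (hC : IsArcChain C x y) (n : ℕ) :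
    IsArcChain (coarsen n C) x y := by
  obtain ⟨hval, hconn, hx, hy⟩ := hC
  have hmem : ∀ q ∈ _root_.coarsen n C, q.2 < 2 ^ q.1 ∧
      (dyadicArc q.1 q.2 ∩ arcUnion C).Nonempty := by
    simp only [_root_.coarsen, Finset.mem_union, Finset.mem_filter, Finset.mem_image]
    rintro q (⟨hq, -⟩ | ⟨j, hj, rfl⟩)
    · obtain ⟨z, hz⟩ := (isConnected_dyadicArc q.1 q.2).nonempty
      exact ⟨hval q hq, z, hz, mem_biUnion hq hz⟩
    · refine ⟨lt_of_mem_newAncestors hval hj, ?_⟩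
      obtain ⟨⟨p, hp, hnp, rfl⟩, -⟩ := mem_newAncestors.1 hj
      obtain ⟨z, hz⟩ := (isConnected_dyadicArc p.1 p.2).nonempty
      exact ⟨z, dyadicArc_subset_ancestor hnp.le p.2 hz, mem_biUnion hp hz⟩
  have hU := union_eq_right.2 (arcUnion_subset_arcUnion_coarsen (n := n) (C := C))
  refine ⟨fun q hq => (hmem q hq).1, ?_, arcUnion_subset_arcUnion_coarsen hx,
    arcUnion_subset_arcUnion_coarsen hy⟩
  rw [← hU]
  exact hconn.union_biUnion (fun q _ => isConnected_dyadicArc q.1 q.2) fun q hq => (hmem q hq).2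

theorem sum_coarsen_le {Δ' : ℕ → ℕ → ℝ} (h : ∀ m j, j < 2 ^ m → 0 ≤ Δ' m j)
    (hC : ∀ p ∈ C, p.2 < 2 ^ p.1) :
    ∑ p ∈ coarsen n C, Δ' p.1 p.2 ≤
      ∑ p ∈ C with p.1 ≤ n, Δ' p.1 p.2 + ∑ j ∈ newAncestors n C, Δ' n j := by
  have hinter := Finset.sum_union_inter (f := fun p : ℕ × ℕ => Δ' p.1 p.2)
    (s₁ := C.filter fun p => p.1 ≤ n) (s₂ := (newAncestors n C).image (n, ·))
  have hnonneg : 0 ≤ ∑ p ∈ (C.filter fun p => p.1 ≤ n) ∩ (newAncestors n C).image (n, ·),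
      Δ' p.1 p.2 :=
    Finset.sum_nonneg fun p hp => h _ _ (hC p (Finset.mem_filter.1 (Finset.mem_inter.1 hp).1).1)
  rw [Finset.sum_image (Prod.mk_right_injective n).injOn] at hinter
  rw [coarsen]
  linarith

theorem IsS1.le_sum_trunc_of_dyadicArc_subset {Δ : ℕ → ℕ → ℝ} (hΔ : IsS1 Δ)
    (hC : ∀ p ∈ C, p.2 < 2 ^ p.1) {j : ℕ} (hj : j ∈ newAncestors n C)
    (hsub : dyadicArc n j ⊆ arcUnion C) :
    Δ n j ≤ ∑ p ∈ C.filter (fun p => n < p.1) with ancestorIndex n p = j, trunc Δ n p.1 p.2 := by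
  set F := (C.filter fun p => n < p.1).filter fun p => ancestorIndex n p = j
  have hjlt := lt_of_mem_newAncestors hC hj
  -- An arc of `C` through a point of the open arc `j` would contain arc `j` if its level were
  -- `≤ n`, so it is a descendant of `j`.
  have hcov : dyadicIoo n j ⊆ ⋃ p ∈ F, dyadicIcc p.1 p.2 := by
    intro t ht
    obtain ⟨q, hq, htq⟩ := mem_iUnion₂.1 (hsub ⟨t, Ioo_subset_Icc_self ht, rfl⟩)
    replace htq := mem_dyadicIcc_of_coe_mem (hC q hq) (dyadicIoo_subset_Ioo hjlt ht) htq
    obtain ⟨h₁, h₂⟩ := dyadic_cross_lt ⟨t, htq, ht⟩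
    rcases le_or_gt q.1 n with hqn | hnq
    · refine absurd ⟨q, hq, hqn, ?_⟩ (mem_newAncestors.1 hj).2
      rw [← Nat.div_two_pow_sub_eq_of_lt_of_lt hqn h₁ h₂]
      exact dyadicArc_subset_ancestor hqn j
    · refine mem_biUnion (Finset.mem_filter.2 ⟨Finset.mem_filter.2 ⟨hq, hnq⟩, ?_⟩) htq
      exact Nat.div_two_pow_sub_eq_of_lt_of_lt hnq.le h₂ h₁
  have htrunc : ∀ p ∈ F, trunc Δ n p.1 p.2 = Δ n j * 2 ^ n * (1 / 2 ^ p.1) := by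
    intro p hp
    simp only [F, Finset.mem_filter] at hp
    rw [trunc_of_lt hp.1.2, show p.2 / 2 ^ (p.1 - n) = j from hp.2,
      pow_sub₀ (2 : ℝ) two_ne_zero hp.1.2.le]
    field_simp
  have hpos : 0 ≤ Δ n j * 2 ^ n := mul_nonneg (hΔ.pos hjlt).le (by positivity)
  rw [Finset.sum_congr rfl htrunc, ← Finset.mul_sum]
  calc Δ n j = Δ n j * 2 ^ n * (1 / 2 ^ n) := by field_simp
  _ ≤ _ := mul_le_mul_of_nonneg_left (one_div_two_pow_le_sum_of_dyadicIoo_subset hcov) hpos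

open scoped Classical in
theorem card_filter_newAncestors_not_subset_le_two (hC : ∀ p ∈ C, p.2 < 2 ^ p.1)
    (hconn : IsConnected (arcUnion C)) :
    ((newAncestors n C).filter fun j => ¬dyadicArc n j ⊆ arcUnion C).card ≤ 2 := by
  have hclosed : IsClosed (arcUnion C) :=
    isClosed_biUnion_finset fun p _ => isClosed_dyadicArc p.1 p.2
  refine AddCircle.card_le_two_of_pairwiseDisjoint hconn.2
    (fun j _ => isPreconnected_openDyadicArc n j) ?_ ?_ ?_
  · intro i hi j hj hij
    exact openDyadicArc_disjoint (lt_of_mem_newAncestors hC (Finset.mem_filter.1 hi).1)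
      (lt_of_mem_newAncestors hC (Finset.mem_filter.1 hj).1) hij
  · intro j hj
    obtain ⟨⟨p, hp, hnp, rfl⟩, -⟩ := mem_newAncestors.1 (Finset.mem_filter.1 hj).1
    obtain ⟨z, hz⟩ := openDyadicArc_nonempty p.1 p.2
    exact ⟨z, openDyadicArc_subset_ancestor hnp.le p.2 hz,
      mem_biUnion hp (openDyadicArc_subset_dyadicArc p.1 p.2 hz)⟩
  · intro j hj
    by_contra h
    rw [not_nonempty_iff_eq_empty, sdiff_eq_empty] at h
    exact (Finset.mem_filter.1 hj).2
      ((dyadicArc_subset_closure_openDyadicArc n j).trans (closure_minimal h hclosed))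

open scoped Classical in
theorem IsS1.dOf_le_sum_trunc_add {Δ : ℕ → ℕ → ℝ} (hΔ : IsS1 Δ) {M : ℝ}
    (hM : ∀ j < 2 ^ n, Δ n j ≤ M) {x y : 𝕊} (hC : IsArcChain C x y) :
    dOf Δ x y ≤ ∑ p ∈ C, trunc Δ n p.1 p.2 + 2 * M := by
  obtain ⟨hval, hconn, -⟩ := id hC
  set A := newAncestors n C
  set U := arcUnion C
  have hM0 : 0 ≤ M := (hΔ.pos (Nat.two_pow_pos n)).le.trans (hM 0 (Nat.two_pow_pos n))
  have hbad : ∑ j ∈ A with ¬dyadicArc n j ⊆ U, Δ n j ≤ 2 * M := by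
    refine (Finset.sum_le_card_nsmul _ _ M fun j hj =>
      hM j (lt_of_mem_newAncestors hval (Finset.mem_filter.1 hj).1)).trans ?_
    rw [nsmul_eq_mul]
    gcongr
    exact_mod_cast card_filter_newAncestors_not_subset_le_two hval hconn
  have hgood : ∑ j ∈ A with dyadicArc n j ⊆ U, Δ n j ≤ ∑ p ∈ C with n < p.1, trunc Δ n p.1 p.2 :=
    (Finset.sum_le_sum fun j hj => hΔ.le_sum_trunc_of_dyadicArc_subset hval
      (Finset.mem_filter.1 hj).1 (Finset.mem_filter.1 hj).2).trans
    (Finset.sum_fiberwise_le_sum_of_sum_fiber_nonneg fun _ _ => Finset.sum_nonneg fun p hp =>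
      (hΔ.trunc_pos n (hval p (Finset.mem_filter.1 (Finset.mem_filter.1 hp).1).1)).le)
  have hshallow : ∑ p ∈ C with p.1 ≤ n, Δ p.1 p.2 = ∑ p ∈ C with p.1 ≤ n, trunc Δ n p.1 p.2 :=
    Finset.sum_congr rfl fun p hp => (trunc_of_le (Finset.mem_filter.1 hp).2).symm
  have hnonneg : ∀ m j, j < 2 ^ m → 0 ≤ Δ m j := fun _ _ hj => (hΔ.pos hj).le
  calc dOf Δ x y ≤ ∑ p ∈ coarsen n C, Δ p.1 p.2 :=
        dOf_le_sum hnonneg (hC.coarsen n)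
  _ ≤ ∑ p ∈ C with p.1 ≤ n, Δ p.1 p.2 + ∑ j ∈ A, Δ n j := sum_coarsen_le hnonneg hval
  _ = ∑ p ∈ C with p.1 ≤ n, trunc Δ n p.1 p.2 +
        (∑ j ∈ A with dyadicArc n j ⊆ U, Δ n j + ∑ j ∈ A with ¬dyadicArc n j ⊆ U, Δ n j) := by
        rw [hshallow, Finset.sum_filter_add_sum_filter_not]
  _ ≤ ∑ p ∈ C with p.1 ≤ n, trunc Δ n p.1 p.2 +
        (∑ p ∈ C with n < p.1, trunc Δ n p.1 p.2 + 2 * M) := by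
        gcongr
  _ = ∑ p ∈ C, trunc Δ n p.1 p.2 + 2 * M := by
        rw [← Finset.sum_filter_add_sum_filter_not C (fun p => p.1 ≤ n)]
        simp only [not_le]
        ring

end Coarsen

theorem IsS1.dOf_le_dOf_trunc_add {Δ : ℕ → ℕ → ℝ} (hΔ : IsS1 Δ) {n : ℕ} {M : ℝ}
    (hM : ∀ j < 2 ^ n, Δ n j ≤ M) (x y : 𝕊) : dOf Δ x y ≤ dOf (trunc Δ n) x y + 2 * M := by
  classical
  rw [← sub_le_iff_le_add]
  refine le_dOf fun N c hc => sub_le_iff_le_add.2 ?_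
  calc dOf Δ x y ≤ ∑ p ∈ Finset.univ.image c, trunc Δ n p.1 p.2 + 2 * M :=
        hΔ.dOf_le_sum_trunc_add hM hc.isArcChain_image
  _ ≤ ∑ k, trunc Δ n (c k).1 (c k).2 + 2 * M := by
        gcongr
        refine Finset.sum_image_le_of_nonneg fun p hp => (hΔ.trunc_pos n ?_).le
        obtain ⟨k, -, rfl⟩ := Finset.mem_image.1 hp
        exact hc.1 k

theorem IsS1.dOf_trunc_le {Δ : ℕ → ℕ → ℝ} (hΔ : IsS1 Δ) (n : ℕ) (x y : 𝕊) :
    dOf (trunc Δ n) x y ≤ dOf Δ x y :=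
  dOf_mono (fun _ _ hj => (hΔ.trunc_pos n hj).le) (fun _ _ hj => hΔ.trunc_le n hj) x y

theorem IsS1.tendsto_dOf_trunc {Δ : ℕ → ℕ → ℝ} (hΔ : IsS1 Δ) (x y : 𝕊) :
    Filter.Tendsto (fun n => dOf (trunc Δ n) x y) Filter.atTop (nhds (dOf Δ x y)) := by
  rw [Metric.tendsto_atTop]
  intro ε hε
  obtain ⟨N, hN⟩ := hΔ.2.2.2 (ε / 4) (by positivity)
  refine ⟨N, fun n hn => ?_⟩
  have h₁ := hΔ.dOf_le_dOf_trunc_add (fun j hj => (hN n hn j hj).le) x y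
  have h₂ := hΔ.dOf_trunc_le n x y
  rw [Real.dist_eq, abs_sub_lt_iff]
  constructor <;> linarith

/-- For all `x, y ∈ 𝕊` and every `n`, `d_Δ(x,y) ≤ d_n(x,y) + 2·max{Δ(I) : I ∈ ℐ_n}`;
in particular `d_n(x,y) → d_Δ(x,y)` as `n → ∞`. -/
theorem dOf_le_dOf_trunc_add_two_max (Δ : ℕ → ℕ → ℝ) (hΔ : IsS1 Δ)
    (x y : AddCircle (1 : ℝ)) :
    (∀ (n : ℕ) (M : ℝ), (∀ j < 2 ^ n, Δ n j ≤ M) → (∃ j < 2 ^ n, Δ n j = M) →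
      dOf Δ x y ≤ dOf (trunc Δ n) x y + 2 * M) ∧
    Filter.Tendsto (fun n : ℕ => dOf (trunc Δ n) x y) Filter.atTop (nhds (dOf Δ x y)) :=
  ⟨fun _ _ hM _ => hΔ.dOf_le_dOf_trunc_add hM x y, hΔ.tendsto_dOf_trunc x y⟩
end
end

section
/- Let Γ be a metric space with diameter at most 1 and let Γ₀ be the circle 𝕊 = [0,1]/{0,1} equipped with the arc-length metric λ(s,t) = min{|t−s|, 1−|t−s|}. Suppose there exists a constant C ≥ 1 such that F : Γ → Γ₀ is C-Lipschitz and, for every subset E ⊆ Γ₀ with diam(E) > 0, every diam(E)-component of F⁻¹(E) has diameter at most C·diam(E). Then, for C′ := max{C, 8}, for every r > 0 and every subset E ⊆ Γ₀ with diam(E) ≤ r, every r-component of F⁻¹(E) has diameter at most C′·r. -/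
/-- A subset `U` of a space with a distance function `d` is `δ`-connected if every pair of
points of `U` is joined by a finite sequence of points of `U` with consecutive
distances at most `δ`. -/
def DConn {α : Type*} (d : α → α → ℝ) (δ : ℝ) (U : Set α) : Prop :=
  ∀ x ∈ U, ∀ y ∈ U, ∃ (N : ℕ) (c : Fin (N + 1) → α),
    (∀ i, c i ∈ U) ∧ c 0 = x ∧ c (Fin.last N) = y ∧
      ∀ i : Fin N, d (c i.castSucc) (c i.succ) ≤ δ

/-- `U` is a `δ`-component of `S`: a maximal `δ`-connected subset of `S`. -/
def DComp {α : Type*} (d : α → α → ℝ) (δ : ℝ) (S U : Set α) : Prop :=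
  U ⊆ S ∧ DConn d δ U ∧ ∀ V : Set α, U ⊆ V → V ⊆ S → DConn d δ V → V = U

/-!
If `8 r ≥ 1` the bound is trivial since `diam Γ ≤ 1`. Otherwise a set `E` of diameter at most
`r < 1/8` lies in a closed arc `E'` of length `r`, which has diameter exactly `r`. An
`r`-component of `F⁻¹ E` is `r`-connected inside `F⁻¹ E'`, so by Zorn it lies in an
`r`-component of `F⁻¹ E'`, whose diameter is at most `C r` by hypothesis.
-/

open Set Metric

section DeltaConnected

variable {α : Type*} {d : α → α → ℝ} {δ : ℝ}

theorem DConn.sUnion_of_isChain {𝒞 : Set (Set α)} (hconn : ∀ V ∈ 𝒞, DConn d δ V)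
    (hchain : IsChain (· ⊆ ·) 𝒞) : DConn d δ (⋃₀ 𝒞) := by
  rintro x ⟨V, hV, hxV⟩ y ⟨W, hW, hyW⟩
  obtain ⟨X, hX, hVX, hWX⟩ : ∃ X ∈ 𝒞, V ⊆ X ∧ W ⊆ X := by
    rcases hchain.total hV hW with hVW | hWV
    · exact ⟨W, hW, hVW, subset_rfl⟩
    · exact ⟨V, hV, subset_rfl, hWV⟩
  obtain ⟨N, c, hcX, hc₀, hcN, hstep⟩ := hconn X hX x (hVX hxV) y (hWX hyW)
  exact ⟨N, c, fun i => subset_sUnion_of_mem hX (hcX i), hc₀, hcN, hstep⟩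

theorem DConn.exists_dComp_superset {S W : Set α} (hWS : W ⊆ S) (hW : DConn d δ W) :
    ∃ U, W ⊆ U ∧ DComp d δ S U := by
  let 𝒮 : Set (Set α) := {V | W ⊆ V ∧ V ⊆ S ∧ DConn d δ V}
  have hchain : ∀ 𝒞 ⊆ 𝒮, IsChain (· ⊆ ·) 𝒞 → 𝒞.Nonempty → ∃ ub ∈ 𝒮, ∀ V ∈ 𝒞, V ⊆ ub := by
    rintro 𝒞 h𝒞 hchain ⟨V, hV⟩
    refine ⟨⋃₀ 𝒞, ⟨(h𝒞 hV).1.trans (subset_sUnion_of_mem hV),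
      sUnion_subset fun X hX => (h𝒞 hX).2.1,
      DConn.sUnion_of_isChain (fun X hX => (h𝒞 hX).2.2) hchain⟩,
      fun X hX => subset_sUnion_of_mem hX⟩
  obtain ⟨U, hWU, hU⟩ := zorn_subset_nonempty 𝒮 hchain W ⟨subset_rfl, hWS, hW⟩
  exact ⟨U, hWU, hU.prop.2.1, hU.prop.2.2, fun V hUV hVS hV =>
    (hU.eq_of_subset ⟨hU.prop.1.trans hUV, hVS, hV⟩ hUV).symm⟩

end DeltaConnected

namespace AddCircle

variable {p : ℝ}

theorem exists_coe_eq_abs_sub_eq_dist (x : AddCircle p) (e : ℝ) :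
    ∃ t : ℝ, (t : AddCircle p) = x ∧ |t - e| = dist x e := by
  obtain ⟨y, rfl⟩ := QuotientAddGroup.mk_surjective x
  set n := round (p⁻¹ * (y - e))
  refine ⟨y - n * p, ?_, ?_⟩
  · rw [coe_sub, sub_eq_self, coe_eq_zero_iff]
    exact ⟨n, zsmul_eq_mul _ _⟩
  · rw [dist_eq_norm, show (QuotientAddGroup.mk y : AddCircle p) = (y : AddCircle p) from rfl,
      ← coe_sub, norm_eq, sub_right_comm]

variable [hp : Fact (0 < p)]

theorem dist_coe_coe_of_abs_sub_le {s t : ℝ} (h : |s - t| ≤ p / 2) :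
    dist (s : AddCircle p) t = |s - t| := by
  rw [dist_eq_norm, ← coe_sub, norm_coe_eq_abs_iff p hp.out.ne', abs_of_pos hp.out]
  exact h

theorem diam_image_coe_Icc {a r : ℝ} (hr₀ : 0 ≤ r) (hr : r ≤ p / 2) :
    diam (((↑) : ℝ → AddCircle p) '' Icc a (a + r)) = r := by
  have habs : ∀ s ∈ Icc a (a + r), ∀ t ∈ Icc a (a + r), |s - t| ≤ r := fun s hs t ht =>
    abs_sub_le_iff.2 ⟨by linarith [hs.2, ht.1], by linarith [hs.1, ht.2]⟩
  have hdist : ∀ s ∈ Icc a (a + r), ∀ t ∈ Icc a (a + r), dist (s : AddCircle p) t = |s - t| :=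
    fun s hs t ht => dist_coe_coe_of_abs_sub_le ((habs s hs t ht).trans hr)
  apply le_antisymm
  · refine diam_le_of_forall_dist_le hr₀ ?_
    rintro _ ⟨s, hs, rfl⟩ _ ⟨t, ht, rfl⟩
    exact hdist s hs t ht ▸ habs s hs t ht
  · have ha : a ∈ Icc a (a + r) := left_mem_Icc.2 (by linarith)
    have har : a + r ∈ Icc a (a + r) := right_mem_Icc.2 (by linarith)
    calc r = dist (a : AddCircle p) ↑(a + r) := by
          rw [hdist a ha _ har, sub_add_cancel_left, abs_neg, abs_of_nonneg hr₀]
      _ ≤ _ := dist_le_diam_of_mem (isCompact_univ.isBounded.subset (subset_univ _))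
          (mem_image_of_mem _ ha) (mem_image_of_mem _ har)

theorem exists_subset_image_coe_Icc {E : Set (AddCircle p)} {r : ℝ} (hE : diam E ≤ r)
    (hr : 4 * r ≤ p) : ∃ a : ℝ, E ⊆ ((↑) : ℝ → AddCircle p) '' Icc a (a + r) := by
  rcases E.eq_empty_or_nonempty with rfl | ⟨e, he⟩
  · exact ⟨0, empty_subset _⟩
  have hbE : Bornology.IsBounded E := isCompact_univ.isBounded.subset (subset_univ E)
  obtain ⟨e₀, rfl⟩ := QuotientAddGroup.mk_surjective e
  -- Lifts of the points of `E` close to `e₀`; they are pairwise within `r`, as `2 r ≤ p / 2`.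
  let T : Set ℝ := {t | (t : AddCircle p) ∈ E ∧ |t - e₀| ≤ r}
  have hE_lift : ∀ x ∈ E, ∃ t ∈ T, (t : AddCircle p) = x := fun x hx => by
    obtain ⟨t, rfl, ht⟩ := exists_coe_eq_abs_sub_eq_dist x e₀
    exact ⟨t, ⟨hx, ht ▸ (dist_le_diam_of_mem hbE hx he).trans hE⟩, rfl⟩
  have hT : ∀ s ∈ T, ∀ t ∈ T, s - t ≤ r := fun s hs t ht => by
    have hst : |s - t| ≤ p / 2 := by
      calc |s - t| ≤ |s - e₀| + |e₀ - t| := abs_sub_le s e₀ t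
        _ ≤ p / 2 := by rw [abs_sub_comm e₀ t]; linarith [hs.2, ht.2]
    calc s - t ≤ |s - t| := le_abs_self _
      _ = dist (s : AddCircle p) t := (dist_coe_coe_of_abs_sub_le hst).symm
      _ ≤ r := (dist_le_diam_of_mem hbE hs.1 ht.1).trans hE
  obtain ⟨t₀, ht₀, -⟩ := hE_lift _ he
  have hbdd : BddAbove T := ⟨t₀ + r, fun t ht => by linarith [hT t ht t₀ ht₀]⟩
  refine ⟨sSup T - r, fun x hx => ?_⟩
  obtain ⟨t, ht, rfl⟩ := hE_lift x hx
  have hsup : sSup T ≤ t + r := csSup_le ⟨t, ht⟩ fun s hs => by linarith [hT s hs t ht]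
  exact mem_image_of_mem _ ⟨by linarith, by linarith [le_csSup hbdd ht]⟩

end AddCircle

theorem lipschitzLight_criterion_general (Γ : Type*) [MetricSpace Γ]
    (hΓ : EMetric.diam (Set.univ : Set Γ) ≤ 1)
    (F : Γ → AddCircle (1 : ℝ)) (C : ℝ)
    (hcomp : ∀ E : Set (AddCircle (1 : ℝ)), 0 < Metric.diam E →
      ∀ U : Set Γ, DComp dist (Metric.diam E) (F ⁻¹' E) U →
        Metric.diam U ≤ C * Metric.diam E) :
    ∀ r : ℝ, 0 < r → ∀ E : Set (AddCircle (1 : ℝ)), Metric.diam E ≤ r →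
      ∀ U : Set Γ, DComp dist r (F ⁻¹' E) U → Metric.diam U ≤ max C 8 * r := by
  intro r hr E hE U hU
  rcases le_or_gt 1 (8 * r) with hr8 | hr8
  · have hU1 : diam U ≤ 1 := ENNReal.toReal_le_of_le_ofReal zero_le_one <| by
      simpa using (ediam_mono (subset_univ U)).trans hΓ
    nlinarith [le_max_right C 8]
  obtain ⟨a, hEa⟩ := AddCircle.exists_subset_image_coe_Icc hE (by linarith)
  set E' := ((↑) : ℝ → AddCircle (1 : ℝ)) '' Icc a (a + r)
  have hE' : diam E' = r := AddCircle.diam_image_coe_Icc hr.le (by linarith)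
  obtain ⟨V, hUV, hV⟩ := hU.2.1.exists_dComp_superset (hU.1.trans (preimage_mono hEa))
  have hbV : Bornology.IsBounded V := isBounded_iff_ediam_ne_top.2 <|
    ne_top_of_le_ne_top ENNReal.one_ne_top ((ediam_mono (subset_univ V)).trans hΓ)
  calc diam U ≤ diam V := diam_mono hUV hbV
    _ ≤ C * r := hE' ▸ hcomp E' (hE' ▸ hr) V (hE' ▸ hV)
    _ ≤ max C 8 * r := by gcongr; exact le_max_left C 8

/-- Let `Γ` be a metric space of diameter at most `1` and let `Γ₀` be the circle
`𝕊 = [0,1]/{0,1}` with the arc-length metric (realized as `AddCircle (1 : ℝ)` with its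
quotient-norm metric `λ(s,t) = min {|t-s|, 1-|t-s|}`). Suppose `F : Γ → Γ₀` is `C`-Lipschitz
for some `C ≥ 1` and, for every `E ⊆ Γ₀` with `diam E > 0`, every `diam E`-component of
`F ⁻¹' E` has diameter at most `C * diam E`. Then, with `C' := max C 8`, for every `r > 0`
and every `E ⊆ Γ₀` with `diam E ≤ r`, every `r`-component of `F ⁻¹' E` has diameter at most
`C' * r`. -/
theorem lipschitzLight_criterion (Γ : Type*) [MetricSpace Γ]
    (hΓ : EMetric.diam (Set.univ : Set Γ) ≤ 1)
    (F : Γ → AddCircle (1 : ℝ)) (C : ℝ) (hC : 1 ≤ C)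
    (hLip : ∀ x y : Γ, dist (F x) (F y) ≤ C * dist x y)
    (hcomp : ∀ E : Set (AddCircle (1 : ℝ)), 0 < Metric.diam E →
      ∀ U : Set Γ, DComp dist (Metric.diam E) (F ⁻¹' E) U →
        Metric.diam U ≤ C * Metric.diam E) :
    ∀ r : ℝ, 0 < r → ∀ E : Set (AddCircle (1 : ℝ)), Metric.diam E ≤ r →
      ∀ U : Set Γ, DComp dist r (F ⁻¹' E) U → Metric.diam U ≤ max C 8 * r :=
  lipschitzLight_criterion_general Γ hΓ F C hcomp
end
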